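/- arXiv:2103.16966 — 11 statements merged into one kernel-verified Lean document; each statement's English description precedes it below -/
import Mathlib

section
/- Let L be a prefix-closed language over a finite alphabet A, let R be a commutative ring, M an R-module, and d : A* → M a decoration. If the decorated tree T_d(L) is (R,h)-linear for some integer h ≥ 1, then it is (R,h+1)-linear. -/
open scoped Classical

def PrefixClosed {A : Type*} (L : Set (List A)) : Prop :=
  ∀ u v : List A, u ++ v ∈ L → u ∈ L

/-- The domain of the factor of height `h` of the tree `T(L)` rooted at `w`:
the set of words `v` with `|v| ≤ h` and `wv ∈ L`. -/
def Dset {A : Type*} (L : Set (List A)) (h : ℕ) (w : List A) : Set (List A) :=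
  {v | v.length ≤ h ∧ w ++ v ∈ L}

/-- The tree `T(L)` decorated by `d` is `(R,h)`-linear: there is a family of
coefficients `c(D,u,v) ∈ R` such that for every `w ∈ L` and every `u` of length `h`
with `wu ∈ L`, the decoration `d(wu)` is the linear combination
`Σ_{|v| < h, wv ∈ L} c(D_h(w),u,v) • d(wv)`. -/
def IsLinear {A : Type*} (R : Type*) {M : Type*} [CommRing R] [AddCommMonoid M]
    [Module R M] (L : Set (List A)) (d : List A → M) (h : ℕ) : Prop :=
  ∃ c : Set (List A) → List A → List A → R,
    ∀ w ∈ L, ∀ u : List A, u.length = h → w ++ u ∈ L →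
      d (w ++ u) =
        ∑ᶠ v ∈ {v : List A | v.length < h ∧ w ++ v ∈ L},
          c (Dset L h w) u v • d (w ++ v)

/-- Extension of a coefficient family to height `h+1`. -/
noncomputable def extendCoeff {A R : Type*} [CommRing R]
    (c : Set (List A) → List A → List A → R) :
    Set (List A) → List A → List A → R
  | D, a :: u', b :: v' => if a = b then c {x | a :: x ∈ D} u' v' else 0
  | _, _, _ => 0

theorem statement1 {A : Type*} [Fintype A] (R : Type*) {M : Type*} [CommRing R]
    [AddCommMonoid M] [Module R M] (L : Set (List A)) (hpc : PrefixClosed L)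
    (d : List A → M) (h : ℕ) (hh : 1 ≤ h) (hlin : IsLinear R L d h) :
    IsLinear R L d (h + 1) := by
  obtain ⟨c, hc⟩ := hlin
  refine ⟨extendCoeff c, ?_⟩
  intro w hw u hu huL
  match u, hu with
  | a :: u', hu =>
    have hu' : u'.length = h := by simpa using hu
    have hassoc : w ++ (a :: u') = (w ++ [a]) ++ u' := by simp
    have huL' : (w ++ [a]) ++ u' ∈ L := by rwa [hassoc] at huL
    have hwa : w ++ [a] ∈ L := hpc (w ++ [a]) u' huL'
    have key := hc (w ++ [a]) hwa u' hu' huL'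
    have hD : Dset L h (w ++ [a]) = {x | a :: x ∈ Dset L (h + 1) w} := by
      ext v
      simp [Dset, Nat.succ_le_succ_iff]
    set f : List A → M := fun v =>
      extendCoeff c (Dset L (h + 1) w) (a :: u') v • d (w ++ v) with hf
    have himg : ∀ v' : List A,
        f (a :: v') = c (Dset L h (w ++ [a])) u' v' • d ((w ++ [a]) ++ v') := by
      intro v'
      simp [hf, extendCoeff, hD]
    have hsets : ∀ x ∈ Function.support f,
        x ∈ {v : List A | v.length < h + 1 ∧ w ++ v ∈ L} ↔
        x ∈ (fun v' => a :: v') '' {v' : List A | v'.length < h ∧ (w ++ [a]) ++ v' ∈ L} := by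
      intro x hx
      match x with
      | [] => simp [hf, extendCoeff] at hx
      | b :: x' =>
        have hab : a = b := by
          by_contra hne
          simp [hf, extendCoeff, hne] at hx
        subst hab
        constructor
        · rintro ⟨h1, h2⟩
          exact ⟨x', ⟨by simpa using h1, by simpa using h2⟩, rfl⟩
        · rintro ⟨v', ⟨h1, h2⟩, hv⟩
          obtain rfl : v' = x' := by simpa using hv
          exact ⟨by simpa using h1, by simpa using h2⟩
    calc d (w ++ (a :: u'))
        = d ((w ++ [a]) ++ u') := by rw [hassoc]
      _ = ∑ᶠ v ∈ {v : List A | v.length < h ∧ (w ++ [a]) ++ v ∈ L},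
            c (Dset L h (w ++ [a])) u' v • d ((w ++ [a]) ++ v) := key
      _ = ∑ᶠ v ∈ {v : List A | v.length < h ∧ (w ++ [a]) ++ v ∈ L}, f (a :: v) := by
            exact finsum_mem_congr rfl fun v _ => (himg v).symm
      _ = ∑ᶠ x ∈ (fun v' => a :: v') ''
            {v' : List A | v'.length < h ∧ (w ++ [a]) ++ v' ∈ L}, f x := by
            rw [finsum_mem_image]
            intro x _ y _ hxy
            simpa using hxy
      _ = ∑ᶠ v ∈ {v : List A | v.length < h + 1 ∧ w ++ v ∈ L}, f v := by
            exact (finsum_mem_inter_support_eq' f _ _ hsets).symm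
end

section
/- Let k ≥ 2 be an integer, R a commutative Noetherian ring, M an R-module, and x : ℕ → M a sequence. Then x is (R,k)-regular if and only if there exists an integer h ≥ 1 such that the tree T(L_k) decorated by d(w) = x(val_k(w)) is (R,h)-linear. -/
open scoped Classical

/-- The `k`-kernel of a sequence. -/
def kKernel {M : Type*} (k : ℕ) (x : ℕ → M) : Set (ℕ → M) :=
  {y | ∃ j r : ℕ, r < k ^ j ∧ y = fun n => x (k ^ j * n + r)}

/-- A sequence is `(R,k)`-regular if the `R`-submodule spanned by its `k`-kernel is
finitely generated. -/
def kRegular {M : Type*} (R : Type*) [CommRing R] [AddCommMonoid M] [Module R M]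
    (k : ℕ) (x : ℕ → M) : Prop :=
  (Submodule.span R (kKernel k x)).FG

/-- The value of a word over `{0,…,k−1}` read in base `k`, most significant digit first. -/
def valK (k : ℕ) (w : List (Fin k)) : ℕ :=
  w.foldl (fun acc a => k * acc + a.val) 0

/-- The base-`k` numeration language: the empty word together with the words whose
first letter is nonzero. -/
def Lk (k : ℕ) : Set (List (Fin k)) :=
  {w | ∀ a, w.head? = some a → a.val ≠ 0}

namespace St2

variable {k : ℕ}

lemma valK_aux (a : ℕ) (w : List (Fin k)) :
    w.foldl (fun acc b => k * acc + b.val) a = k ^ w.length * a + valK k w := by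
  induction w generalizing a with
  | nil => simp [valK]
  | cons b w ih =>
      show w.foldl _ (k * a + b.val) = _
      rw [ih (k * a + b.val)]
      have : valK k (b :: w) = k ^ w.length * (k * 0 + b.val) + valK k w := by
        unfold valK
        exact ih _
      rw [this]
      simp only [List.length_cons]
      ring

lemma valK_cons (b : Fin k) (w : List (Fin k)) :
    valK k (b :: w) = k ^ w.length * b.val + valK k w := by
  have := valK_aux (k * 0 + b.val) w
  simpa [valK] using this

lemma valK_singleton (b : Fin k) : valK k [b] = b.val := by simp [valK]

lemma valK_append (w v : List (Fin k)) :
    valK k (w ++ v) = k ^ v.length * valK k w + valK k v := by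
  unfold valK
  rw [List.foldl_append]
  exact valK_aux _ v

lemma valK_lt (hk : 0 < k) (w : List (Fin k)) : valK k w < k ^ w.length := by
  induction w with
  | nil => simp [valK]
  | cons b w ih =>
      rw [valK_cons]
      have hb : b.val + 1 ≤ k := b.isLt
      calc k ^ w.length * b.val + valK k w < k ^ w.length * b.val + k ^ w.length := by omega
        _ = k ^ w.length * (b.val + 1) := by ring
        _ ≤ k ^ w.length * k := Nat.mul_le_mul_left _ hb
        _ = k ^ (b :: w).length := by rw [List.length_cons, pow_succ]

def pad (k : ℕ) (hk : 0 < k) : ℕ → ℕ → List (Fin k)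
  | 0, _ => []
  | h+1, n => pad k hk h (n / k) ++ [⟨n % k, Nat.mod_lt _ hk⟩]

lemma pad_length (hk : 0 < k) (h n : ℕ) : (pad k hk h n).length = h := by
  induction h generalizing n with
  | zero => rfl
  | succ h ih => simp [pad, ih]

lemma valK_pad (hk : 0 < k) {h n : ℕ} (hn : n < k ^ h) : valK k (pad k hk h n) = n := by
  induction h generalizing n with
  | zero =>
      have hn0 : n = 0 := Nat.lt_one_iff.mp (by simpa using hn)
      subst hn0; rfl
  | succ h ih =>
      have hdiv : n / k < k ^ h := by
        rw [Nat.div_lt_iff_lt_mul hk]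
        calc n < k ^ (h+1) := hn
          _ = k ^ h * k := pow_succ k h
      show valK k (pad k hk h (n / k) ++ [_]) = n
      rw [valK_append, ih hdiv, valK_singleton]
      simp only [List.length_singleton, pow_one]
      have := Nat.div_add_mod n k
      omega

lemma pad_valK (hk : 0 < k) (w : List (Fin k)) : pad k hk w.length (valK k w) = w := by
  induction w using List.reverseRecOn with
  | nil => rfl
  | append_singleton w a ih =>
      have hv : valK k (w ++ [a]) = k * valK k w + a.val := by
        rw [valK_append]
        simp [valK]
      rw [hv, List.length_append, List.length_singleton]
      show pad k hk (w.length + 1) _ = _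
      have h1 : (k * valK k w + a.val) / k = valK k w := by
        rw [Nat.mul_add_div hk]
        simp [Nat.div_eq_of_lt a.isLt]
      have h2 : (k * valK k w + a.val) % k = a.val := by
        rw [Nat.mul_add_mod]
        exact Nat.mod_eq_of_lt a.isLt
      simp only [pad, List.length_append, List.length_cons, h1, h2, ih]

def rep (k : ℕ) (hk : 2 ≤ k) (n : ℕ) : List (Fin k) :=
  if h : n = 0 then [] else
    rep k hk (n / k) ++ [⟨n % k, Nat.mod_lt _ (by omega)⟩]
  termination_by n
  decreasing_by exact Nat.div_lt_self (Nat.pos_of_ne_zero h) (by omega)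

lemma rep_zero (hk : 2 ≤ k) : rep k hk 0 = [] := by rw [rep]; simp

lemma rep_pos (hk : 2 ≤ k) {n : ℕ} (hn : n ≠ 0) :
    rep k hk n = rep k hk (n / k) ++ [⟨n % k, Nat.mod_lt _ (by omega)⟩] := by
  rw [rep]; simp [hn]

lemma rep_ne_nil (hk : 2 ≤ k) {n : ℕ} (hn : n ≠ 0) : rep k hk n ≠ [] := by
  rw [rep_pos hk hn]; simp

lemma valK_rep (hk : 2 ≤ k) (n : ℕ) : valK k (rep k hk n) = n := by
  induction n using Nat.strong_induction_on with
  | _ n ih =>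
      by_cases hn : n = 0
      · subst hn; rw [rep_zero]; rfl
      · rw [rep_pos hk hn, valK_append,
          ih (n / k) (Nat.div_lt_self (Nat.pos_of_ne_zero hn) (by omega)), valK_singleton]
        simp only [List.length_singleton, pow_one]
        have := Nat.div_add_mod n k
        omega

lemma rep_mem_Lk (hk : 2 ≤ k) (n : ℕ) : rep k hk n ∈ Lk k := by
  induction n using Nat.strong_induction_on with
  | _ n ih =>
      by_cases hn : n = 0
      · subst hn; rw [rep_zero]; intro a ha; simp at ha
      · rw [rep_pos hk hn]
        rcases eq_or_ne (rep k hk (n / k)) [] with hnil | hnil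
        · have hdiv : n / k = 0 := by
            by_contra hd
            exact rep_ne_nil hk hd hnil
          rw [hnil]
          intro a ha
          simp at ha
          have : n % k = n := by
            have h := Nat.mod_add_div n k
            rw [hdiv] at h
            omega
          rw [← ha]
          simp [this, hn]
        · intro a ha
          rcases List.exists_cons_of_ne_nil hnil with ⟨b, t, hbt⟩
          rw [hbt] at ha
          simp at ha
          have := ih (n / k) (Nat.div_lt_self (Nat.pos_of_ne_zero hn) (by omega))
          rw [hbt] at this
          exact this a (by simp [ha])

lemma rep_length_le (hk : 2 ≤ k) {n j : ℕ} (hn : n < k ^ j) : (rep k hk n).length ≤ j := by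
  induction j generalizing n with
  | zero =>
      have : n = 0 := by simpa using hn
      simp [this, rep_zero]
  | succ j ih =>
      by_cases hn0 : n = 0
      · simp [hn0, rep_zero]
      · rw [rep_pos hk hn0]
        have : n / k < k ^ j := by
          rw [Nat.div_lt_iff_lt_mul (by omega)]
          calc n < k ^ (j+1) := hn
            _ = k ^ j * k := pow_succ k j
        simp only [List.length_append, List.length_singleton]
        have := ih this
        omega

lemma Lk_append {w : List (Fin k)} (hw : w ∈ Lk k) (hne : w ≠ []) (v : List (Fin k)) :
    w ++ v ∈ Lk k := by
  intro a ha
  rcases List.exists_cons_of_ne_nil hne with ⟨b, t, rfl⟩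
  simp at ha
  exact hw a (by simp [ha])

/-- All words of length `< h`. -/
noncomputable def Th (k h : ℕ) (hk : 0 < k) : Finset (List (Fin k)) :=
  ((Finset.range h) ×ˢ Finset.range (k ^ h)).image (fun p => pad k hk p.1 p.2)

lemma mem_Th {h : ℕ} (hk : 0 < k) {v : List (Fin k)} :
    v ∈ Th k h hk ↔ v.length < h := by
  constructor
  · rintro hv
    rcases Finset.mem_image.mp hv with ⟨p, hp, rfl⟩
    rw [pad_length]
    exact (Finset.mem_product.mp hp).1 |> Finset.mem_range.mp
  · intro hv
    apply Finset.mem_image.mpr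
    refine ⟨(v.length, valK k v), ?_, pad_valK hk v⟩
    apply Finset.mem_product.mpr
    constructor
    · exact Finset.mem_range.mpr hv
    · apply Finset.mem_range.mpr
      calc valK k v < k ^ v.length := valK_lt hk v
        _ ≤ k ^ h := Nat.pow_le_pow_right hk (le_of_lt hv)

lemma set_eq_Th {h : ℕ} (hk : 0 < k) {w : List (Fin k)} (hw : w ∈ Lk k) (hne : w ≠ []) :
    {v : List (Fin k) | v.length < h ∧ w ++ v ∈ Lk k} = ↑(Th k h hk) := by
  ext v
  simp only [Set.mem_setOf_eq, Finset.coe_sort_coe, Finset.mem_coe, mem_Th hk]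
  exact ⟨fun hv => hv.1, fun hv => ⟨hv, Lk_append hw hne v⟩⟩

lemma set_eq_Th_root {h : ℕ} (hk : 0 < k) :
    {v : List (Fin k) | v.length < h ∧ [] ++ v ∈ Lk k} =
      ↑((Th k h hk).filter (· ∈ Lk k)) := by
  ext v
  simp [mem_Th hk]

lemma zero_mem_Dset {h : ℕ} (hk : 2 ≤ k) (hh : 1 ≤ h) {w : List (Fin k)} (hw : w ∈ Lk k)
    (hne : w ≠ []) : [(⟨0, by omega⟩ : Fin k)] ∈ Dset (Lk k) h w :=
  ⟨by simpa using hh, Lk_append hw hne _⟩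

lemma zero_not_mem_Dset_root {h : ℕ} (hk : 2 ≤ k) :
    [(⟨0, by omega⟩ : Fin k)] ∉ Dset (Lk k) h ([] : List (Fin k)) := by
  rintro ⟨-, hmem⟩
  exact hmem ⟨0, by omega⟩ (by simp) rfl

lemma Dset_eq {h : ℕ} {w : List (Fin k)} (hw : w ∈ Lk k) (hne : w ≠ []) :
    Dset (Lk k) h w = {v : List (Fin k) | v.length ≤ h} := by
  ext v
  exact ⟨fun hv => hv.1, fun hv => ⟨hv, Lk_append hw hne v⟩⟩

/-- The linear map sending `m` to the sequence supported at `0` with value `m`. -/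
noncomputable def delta (R : Type*) (M : Type*) [CommRing R] [AddCommMonoid M]
    [Module R M] : M →ₗ[R] (ℕ → M) where
  toFun m n := if n = 0 then m else 0
  map_add' a b := by funext n; by_cases hn : n = 0 <;> simp [hn]
  map_smul' r a := by funext n; by_cases hn : n = 0 <;> simp [hn]

section Mpr

variable (hk : 2 ≤ k) {R : Type*} [CommRing R] {M : Type*} [AddCommMonoid M]
  [Module R M] {x : ℕ → M} {h : ℕ} (hh : 1 ≤ h)
  {c : Set (List (Fin k)) → List (Fin k) → List (Fin k) → R}
  (hc : ∀ w ∈ Lk k, ∀ u : List (Fin k), u.length = h → w ++ u ∈ Lk k →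
      x (valK k (w ++ u)) =
        ∑ᶠ v ∈ {v : List (Fin k) | v.length < h ∧ w ++ v ∈ Lk k},
          c (Dset (Lk k) h w) u v • x (valK k (w ++ v)))

include hk hc in
lemma keyL1 (m t : ℕ) (hm : 1 ≤ m) (ht : t < k ^ h) :
    x (k ^ h * m + t) = ∑ v ∈ Th k h (by omega),
      c {v : List (Fin k) | v.length ≤ h} (pad k (by omega) h t) v •
        x (k ^ v.length * m + valK k v) := by
  have hk0 : 0 < k := by omega
  have hw : rep k hk m ∈ Lk k := rep_mem_Lk hk m
  have hne : rep k hk m ≠ [] := rep_ne_nil hk (by omega)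
  have key := hc (rep k hk m) hw (pad k hk0 h t) (pad_length hk0 h t)
    (Lk_append hw hne _)
  rw [set_eq_Th hk0 hw hne, finsum_mem_coe_finset, Dset_eq hw hne] at key
  have hL : valK k (rep k hk m ++ pad k hk0 h t) = k ^ h * m + t := by
    rw [valK_append, pad_length, valK_pad hk0 ht, valK_rep]
  rw [hL] at key
  rw [key]
  apply Finset.sum_congr rfl
  intro v hv
  congr 1
  rw [valK_append, valK_rep]

include hk hc in
lemma stepA (t : ℕ) :
    x t ∈ Submodule.span R (x '' Set.Iio (k ^ h)) := by
  have hk0 : 0 < k := by omega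
  have hph : 0 < k ^ h := pow_pos hk0 h
  induction t using Nat.strong_induction_on with
  | _ t ih =>
    by_cases htl : t < k ^ h
    · exact Submodule.subset_span ⟨t, htl, rfl⟩
    · push_neg at htl
      have hm1 : 1 ≤ t / k ^ h := (Nat.one_le_div_iff hph).mpr htl
      have hs : t % k ^ h < k ^ h := Nat.mod_lt _ hph
      have ht' : t = k ^ h * (t / k ^ h) + t % k ^ h := (Nat.div_add_mod t (k ^ h)).symm
      rw [ht', keyL1 hk hc (t / k ^ h) (t % k ^ h) hm1 hs]
      apply Submodule.sum_mem
      intro v hv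
      apply Submodule.smul_mem
      apply ih
      have hlen : v.length < h := (mem_Th hk0).mp hv
      have hvk := valK_lt hk0 v
      have h1 : k ^ v.length * k ≤ k ^ h := by
        calc k ^ v.length * k = k ^ (v.length + 1) := (pow_succ k v.length).symm
          _ ≤ k ^ h := Nat.pow_le_pow_right hk0 (by omega)
      have h2 : k ^ h * (t / k ^ h) ≤ t := Nat.mul_div_le t (k ^ h)
      have hkey : k ^ v.length * (t / k ^ h) + valK k v < k ^ h * (t / k ^ h) := by
        calc k ^ v.length * (t / k ^ h) + valK k v
            < k ^ v.length * (t / k ^ h) + k ^ v.length := by omega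
          _ = k ^ v.length * (t / k ^ h + 1) := by ring
          _ ≤ k ^ v.length * (2 * (t / k ^ h)) := Nat.mul_le_mul_left _ (by omega)
          _ ≤ k ^ v.length * (k * (t / k ^ h)) := Nat.mul_le_mul_left _
              (Nat.mul_le_mul_right _ hk)
          _ = (k ^ v.length * k) * (t / k ^ h) := by ring
          _ ≤ k ^ h * (t / k ^ h) := Nat.mul_le_mul_right _ h1
      omega

include hk hc in
lemma claimZ :
    ∀ J r : ℕ, r < k ^ J →
      (fun n => if n = 0 then (0 : M) else x (k ^ J * n + r)) ∈
        Submodule.span R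
            ↑(((Finset.range h) ×ˢ Finset.range (k ^ h)).image
              (fun p : ℕ × ℕ => fun n => if n = 0 then (0 : M) else x (k ^ p.1 * n + p.2))) ⊔
          (Submodule.span R (x '' Set.Iio (k ^ h))).map (delta R M) := by
  have hk0 : 0 < k := by omega
  have hph : 0 < k ^ h := pow_pos hk0 h
  intro J
  induction J using Nat.strong_induction_on with
  | _ J ihJ =>
    intro r hr
    by_cases hJ : J < h
    · apply Submodule.mem_sup_left
      apply Submodule.subset_span
      refine Finset.mem_coe.mpr (Finset.mem_image.mpr ⟨(J, r), ?_, rfl⟩)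
      apply Finset.mem_product.mpr
      exact ⟨Finset.mem_range.mpr hJ,
        Finset.mem_range.mpr (lt_of_lt_of_le hr (Nat.pow_le_pow_right hk0 (by omega)))⟩
    · push_neg at hJ
      have hq : r / k ^ h < k ^ (J - h) := by
        rw [Nat.div_lt_iff_lt_mul hph]
        calc r < k ^ J := hr
          _ = k ^ (J - h) * k ^ h := by rw [← pow_add]; congr 1; omega
      have ht : r % k ^ h < k ^ h := Nat.mod_lt _ hph
      have hEq : (fun n => if n = 0 then (0 : M) else x (k ^ J * n + r)) =
          ∑ v ∈ Th k h hk0,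
            c {v : List (Fin k) | v.length ≤ h} (pad k hk0 h (r % k ^ h)) v •
              (fun n => if n = 0 then (0 : M)
                else x (k ^ (J - h + v.length) * n + (k ^ v.length * (r / k ^ h) + valK k v))) := by
        funext n
        rw [Finset.sum_apply]
        by_cases hn : n = 0
        · simp [hn]
        · simp only [hn, if_false, Pi.smul_apply]
          have hm1 : 1 ≤ k ^ (J - h) * n + r / k ^ h := by
            have hp : 0 < k ^ (J - h) * n :=
              Nat.mul_pos (pow_pos hk0 _) (Nat.pos_of_ne_zero hn)
            exact le_trans hp (Nat.le_add_right _ _)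
          have hkey := keyL1 hk hc (k ^ (J - h) * n + r / k ^ h) (r % k ^ h) hm1 ht
          have hL : k ^ h * (k ^ (J - h) * n + r / k ^ h) + r % k ^ h = k ^ J * n + r := by
            have hpow : k ^ h * k ^ (J - h) = k ^ J := by rw [← pow_add]; congr 1; omega
            have hdm := Nat.div_add_mod r (k ^ h)
            calc k ^ h * (k ^ (J - h) * n + r / k ^ h) + r % k ^ h
                = (k ^ h * k ^ (J - h)) * n + (k ^ h * (r / k ^ h) + r % k ^ h) := by ring
              _ = k ^ J * n + r := by rw [hpow, hdm]
          rw [hL] at hkey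
          rw [hkey]
          apply Finset.sum_congr rfl
          intro v hv
          congr 1
          have hpow : k ^ v.length * k ^ (J - h) = k ^ (J - h + v.length) := by
            rw [← pow_add]; congr 1; omega
          congr 1
          calc k ^ v.length * (k ^ (J - h) * n + r / k ^ h) + valK k v
              = (k ^ v.length * k ^ (J - h)) * n + (k ^ v.length * (r / k ^ h) + valK k v) := by
                ring
            _ = k ^ (J - h + v.length) * n + (k ^ v.length * (r / k ^ h) + valK k v) := by
                rw [hpow]
      rw [hEq]
      apply Submodule.sum_mem
      intro v hv
      apply Submodule.smul_mem
      have hlen : v.length < h := (mem_Th hk0).mp hv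
      apply ihJ (J - h + v.length) (by omega)
      have hvk := valK_lt hk0 v
      calc k ^ v.length * (r / k ^ h) + valK k v
          < k ^ v.length * (r / k ^ h) + k ^ v.length := by omega
        _ = k ^ v.length * (r / k ^ h + 1) := by ring
        _ ≤ k ^ v.length * k ^ (J - h) := Nat.mul_le_mul_left _ hq
        _ = k ^ (J - h + v.length) := by rw [← pow_add]; congr 1; omega

include hk hc in
lemma mpr_main [IsNoetherianRing R] : (Submodule.span R (kKernel k x)).FG := by
  have hk0 : 0 < k := by omega
  set M₀ : Submodule R M := Submodule.span R (x '' Set.Iio (k ^ h)) with hM₀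
  set Y : Finset (ℕ → M) := ((Finset.range h) ×ˢ Finset.range (k ^ h)).image
      (fun p : ℕ × ℕ => fun n => if n = 0 then (0 : M) else x (k ^ p.1 * n + p.2)) with hY
  set N : Submodule R (ℕ → M) := Submodule.span R ↑Y ⊔ M₀.map (delta R M) with hN
  have hM₀fg : M₀.FG := by
    apply Submodule.fg_def.mpr
    exact ⟨x '' Set.Iio (k ^ h), (Set.finite_Iio _).image x, rfl⟩
  have hNfg : N.FG := Submodule.FG.sup ⟨Y, rfl⟩ (hM₀fg.map _)
  have hker : kKernel k x ⊆ ↑N := by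
    rintro y ⟨J, r, hr, rfl⟩
    have h1 : (fun n => if n = 0 then (0 : M) else x (k ^ J * n + r)) ∈ N :=
      claimZ hk hc J r hr
    have h2 : delta R M (x r) ∈ N := by
      apply Submodule.mem_sup_right
      exact Submodule.mem_map_of_mem (stepA hk hc r)
    have heq : (fun n => x (k ^ J * n + r)) =
        (fun n => if n = 0 then (0 : M) else x (k ^ J * n + r)) + delta R M (x r) := by
      funext n
      by_cases hn : n = 0 <;> simp [delta, hn]
    rw [heq]
    exact N.add_mem h1 h2
  have hle : Submodule.span R (kKernel k x) ≤ N := Submodule.span_le.mpr hker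
  letI : AddCommGroup M := Module.addCommMonoidToAddCommGroup R
  haveI : IsNoetherian R N := isNoetherian_of_fg_of_noetherian N hNfg
  have h1 : ((Submodule.span R (kKernel k x)).comap N.subtype).FG :=
    IsNoetherian.noetherian _
  have h2 : Submodule.span R (kKernel k x) =
      Submodule.map N.subtype ((Submodule.span R (kKernel k x)).comap N.subtype) := by
    rw [Submodule.map_comap_subtype]
    exact (inf_eq_right.mpr hle).symm
  rw [h2]
  exact h1.map _

end Mpr

section Mp

variable (hk : 2 ≤ k) {R : Type*} [CommRing R] {M : Type*} [AddCommMonoid M]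
  [Module R M] {x : ℕ → M}

lemma span_finset_subset {S : Set (ℕ → M)} (hfg : (Submodule.span R S).FG) :
    ∃ T : Finset (ℕ → M), ↑T ⊆ S ∧
      Submodule.span R (↑T : Set (ℕ → M)) = Submodule.span R S := by
  obtain ⟨G, hG⟩ := hfg
  have hmem : ∀ g ∈ G, ∃ T : Finset (ℕ → M), ↑T ⊆ S ∧
      g ∈ Submodule.span R (↑T : Set (ℕ → M)) := by
    intro g hg
    have : g ∈ Submodule.span R S := hG ▸ Submodule.subset_span hg
    exact Submodule.mem_span_finite_of_mem_span this
  choose! f hf1 hf2 using hmem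
  refine ⟨G.biUnion f, ?_, ?_⟩
  · intro y hy
    rcases Finset.mem_coe.mp hy |> Finset.mem_biUnion.mp with ⟨g, hg, hyf⟩
    exact hf1 g hg hyf
  · apply le_antisymm
    · apply Submodule.span_le.mpr
      intro y hy
      rcases Finset.mem_coe.mp hy |> Finset.mem_biUnion.mp with ⟨g, hg, hyf⟩
      exact Submodule.subset_span (hf1 g hg hyf)
    · rw [← hG]
      apply Submodule.span_le.mpr
      intro g hg
      have hsub : (↑(f g) : Set (ℕ → M)) ⊆ ↑(G.biUnion f) := by
        intro y hy
        exact Finset.mem_coe.mpr (Finset.mem_biUnion.mpr ⟨g, hg, Finset.mem_coe.mp hy⟩)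
      exact Submodule.span_mono hsub (hf2 g hg)

include hk in
lemma mp_main (hreg : (Submodule.span R (kKernel k x)).FG) :
    ∃ h : ℕ, 1 ≤ h ∧ IsLinear R (Lk k) (fun w => x (valK k w)) h := by
  have hk0 : 0 < k := by omega
  obtain ⟨T, hTsub, hTspan⟩ := span_finset_subset hreg
  have hker : ∀ y ∈ T, ∃ j r : ℕ, r < k ^ j ∧ y = fun n => x (k ^ j * n + r) :=
    fun y hy => hTsub hy
  choose! jf rf hjr1 hjr2 using hker
  set h := T.sup jf + 1 with hdef
  have hjlt : ∀ y ∈ T, jf y < h := fun y hy => Nat.lt_succ_of_le (Finset.le_sup hy)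
  have hz : ∀ r : ℕ, r < k ^ h → ∃ f : (ℕ → M) → R,
      ∑ y ∈ T, f y • y = fun n => x (k ^ h * n + r) := by
    intro r hr
    suffices H : (fun n => x (k ^ h * n + r)) ∈ Submodule.span R (↑T : Set (ℕ → M)) by
      obtain ⟨f, -, hf⟩ := Submodule.mem_span_finset.mp H
      exact ⟨f, hf⟩
    rw [hTspan]
    exact Submodule.subset_span ⟨h, r, hr, rfl⟩
  choose! α hα using hz
  refine ⟨h, by omega, ?_⟩
  refine ⟨fun D u v => if [(⟨0, by omega⟩ : Fin k)] ∈ D then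
    (∑ y ∈ T.filter (fun y => pad k hk0 (jf y) (rf y) = v), α (valK k u) y)
    else (∑ y ∈ T.filter (fun y => rep k hk (rf y) = v), α (valK k u) y), ?_⟩
  intro w hw u hu hwu
  have hvalu : valK k u < k ^ h := by
    have := valK_lt hk0 u
    rwa [hu] at this
  by_cases hne : w = []
  · -- root case
    subst hne
    have hvu : valK k (([] : List (Fin k)) ++ u) = k ^ h * 0 + valK k u := by simp
    have hmap : ∀ y ∈ T, rep k hk (rf y) ∈ (Th k h hk0).filter (· ∈ Lk k) := by
      intro y hy
      apply Finset.mem_filter.mpr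
      refine ⟨(mem_Th hk0).mpr ?_, rep_mem_Lk hk _⟩
      have := rep_length_le hk (hjr1 y hy)
      have := hjlt y hy
      omega
    calc (fun w => x (valK k w)) (([] : List (Fin k)) ++ u)
        = (∑ y ∈ T, α (valK k u) y • y) 0 := by
          rw [hα (valK k u) hvalu]
          simp only []
          rw [hvu]
      _ = ∑ y ∈ T, α (valK k u) y • x (k ^ jf y * 0 + rf y) := by
          rw [Finset.sum_apply]
          apply Finset.sum_congr rfl
          intro y hy
          rw [Pi.smul_apply]
          congr 1
          conv_lhs => rw [hjr2 y hy]
      _ = ∑ v ∈ (Th k h hk0).filter (· ∈ Lk k),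
            ∑ y ∈ T.filter (fun y => rep k hk (rf y) = v),
              α (valK k u) y • x (k ^ jf y * 0 + rf y) :=
          (Finset.sum_fiberwise_of_maps_to hmap _).symm
      _ = ∑ v ∈ (Th k h hk0).filter (· ∈ Lk k),
            ∑ y ∈ T.filter (fun y => rep k hk (rf y) = v),
              α (valK k u) y • x (valK k (([] : List (Fin k)) ++ v)) := by
          apply Finset.sum_congr rfl
          intro v hv
          apply Finset.sum_congr rfl
          intro y hy
          rcases Finset.mem_filter.mp hy with ⟨hyT, hyv⟩
          rw [Nat.mul_zero, Nat.zero_add, List.nil_append, ← hyv, valK_rep]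
      _ = ∑ v ∈ (Th k h hk0).filter (· ∈ Lk k),
            (∑ y ∈ T.filter (fun y => rep k hk (rf y) = v), α (valK k u) y) •
              x (valK k (([] : List (Fin k)) ++ v)) := by
          apply Finset.sum_congr rfl
          intro v hv
          rw [Finset.sum_smul]
      _ = ∑ v ∈ (Th k h hk0).filter (· ∈ Lk k),
            (if [(⟨0, by omega⟩ : Fin k)] ∈ Dset (Lk k) h ([] : List (Fin k)) then
              (∑ y ∈ T.filter (fun y => pad k hk0 (jf y) (rf y) = v), α (valK k u) y)
              else (∑ y ∈ T.filter (fun y => rep k hk (rf y) = v), α (valK k u) y)) •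
              (fun w => x (valK k w)) (([] : List (Fin k)) ++ v) := by
          apply Finset.sum_congr rfl
          intro v hv
          rw [if_neg (zero_not_mem_Dset_root hk)]
      _ = ∑ᶠ v ∈ {v : List (Fin k) | v.length < h ∧ ([] : List (Fin k)) ++ v ∈ Lk k},
            (if [(⟨0, by omega⟩ : Fin k)] ∈ Dset (Lk k) h ([] : List (Fin k)) then
              (∑ y ∈ T.filter (fun y => pad k hk0 (jf y) (rf y) = v), α (valK k u) y)
              else (∑ y ∈ T.filter (fun y => rep k hk (rf y) = v), α (valK k u) y)) •
              (fun w => x (valK k w)) (([] : List (Fin k)) ++ v) := by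
          rw [set_eq_Th_root hk0, finsum_mem_coe_finset]
  · -- inner case
    have hvu : valK k (w ++ u) = k ^ h * valK k w + valK k u := by
      rw [valK_append, hu]
    have hmap : ∀ y ∈ T, pad k hk0 (jf y) (rf y) ∈ Th k h hk0 := by
      intro y hy
      exact (mem_Th hk0).mpr (by rw [pad_length]; exact hjlt y hy)
    calc (fun w => x (valK k w)) (w ++ u)
        = (∑ y ∈ T, α (valK k u) y • y) (valK k w) := by
          rw [hα (valK k u) hvalu]
          simp only []
          rw [hvu]
      _ = ∑ y ∈ T, α (valK k u) y • x (k ^ jf y * valK k w + rf y) := by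
          rw [Finset.sum_apply]
          apply Finset.sum_congr rfl
          intro y hy
          rw [Pi.smul_apply]
          congr 1
          conv_lhs => rw [hjr2 y hy]
      _ = ∑ v ∈ Th k h hk0,
            ∑ y ∈ T.filter (fun y => pad k hk0 (jf y) (rf y) = v),
              α (valK k u) y • x (k ^ jf y * valK k w + rf y) :=
          (Finset.sum_fiberwise_of_maps_to hmap _).symm
      _ = ∑ v ∈ Th k h hk0,
            ∑ y ∈ T.filter (fun y => pad k hk0 (jf y) (rf y) = v),
              α (valK k u) y • x (valK k (w ++ v)) := by
          apply Finset.sum_congr rfl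
          intro v hv
          apply Finset.sum_congr rfl
          intro y hy
          rcases Finset.mem_filter.mp hy with ⟨hyT, hyv⟩
          congr 1
          rw [valK_append, ← hyv, pad_length, valK_pad hk0 (hjr1 y hyT)]
      _ = ∑ v ∈ Th k h hk0,
            (∑ y ∈ T.filter (fun y => pad k hk0 (jf y) (rf y) = v), α (valK k u) y) •
              x (valK k (w ++ v)) := by
          apply Finset.sum_congr rfl
          intro v hv
          rw [Finset.sum_smul]
      _ = ∑ v ∈ Th k h hk0,
            (if [(⟨0, by omega⟩ : Fin k)] ∈ Dset (Lk k) h w then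
              (∑ y ∈ T.filter (fun y => pad k hk0 (jf y) (rf y) = v), α (valK k u) y)
              else (∑ y ∈ T.filter (fun y => rep k hk (rf y) = v), α (valK k u) y)) •
              (fun w => x (valK k w)) (w ++ v) := by
          apply Finset.sum_congr rfl
          intro v hv
          rw [if_pos (zero_mem_Dset hk (by omega) hw hne)]
      _ = ∑ᶠ v ∈ {v : List (Fin k) | v.length < h ∧ w ++ v ∈ Lk k},
            (if [(⟨0, by omega⟩ : Fin k)] ∈ Dset (Lk k) h w then
              (∑ y ∈ T.filter (fun y => pad k hk0 (jf y) (rf y) = v), α (valK k u) y)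
              else (∑ y ∈ T.filter (fun y => rep k hk (rf y) = v), α (valK k u) y)) •
              (fun w => x (valK k w)) (w ++ v) := by
          rw [set_eq_Th hk0 hw hne, finsum_mem_coe_finset]

end Mp

end St2

theorem statement2 (k : ℕ) (hk : 2 ≤ k) (R : Type*) [CommRing R] [IsNoetherianRing R]
    (M : Type*) [AddCommMonoid M] [Module R M] (x : ℕ → M) :
    kRegular R k x ↔
      ∃ h : ℕ, 1 ≤ h ∧ IsLinear R (Lk k) (fun w => x (valK k w)) h := by
  constructor
  · intro hreg
    exact St2.mp_main hk hreg
  · rintro ⟨h, hh, c, hc⟩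
    exact St2.mpr_main hk hc
end

section
/- Let S = (L,A,<) be an abstract numeration system built on an infinite prefix-closed regular language L (accepted by a DFA with finitely many states), let R be a commutative Noetherian ring, M an R-module, and x : ℕ → M a sequence. Then the R-submodule of the module of sequences ℕ → M spanned by the S-kernel of x is finitely generated if and only if, for every h ≥ 0, the R-submodule spanned by the h-filtered S-kernel of x is finitely generated. -/
open scoped Classical

/-- Radix order on words: shorter words come first, words of equal length are
compared lexicographically. -/
def radixLt {A : Type*} [LinearOrder A] (u v : List A) : Prop :=
  u.length < v.length ∨ (u.length = v.length ∧ List.Lex (· < ·) u v)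

/-- `valS L w` is the number of words of `L` that are smaller than `w` in radix order. -/
noncomputable def valS {A : Type*} [LinearOrder A] (L : Set (List A)) (w : List A) : ℕ :=
  {v | v ∈ L ∧ radixLt v w}.ncard

/-- The kernel sequence `τ(x,u)`: `τ(x,u)(n) = x(val_S(rep_S(n)·u))` if
`rep_S(n)·u ∈ L`, and `0` otherwise. -/
noncomputable def tauS {A : Type*} [LinearOrder A] {M : Type*} [Zero M]
    (L : Set (List A)) (rep : ℕ → List A) (x : ℕ → M) (u : List A) : ℕ → M :=
  fun n => if rep n ++ u ∈ L then x (valS L (rep n ++ u)) else 0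

/-- The `S`-kernel of `x`: the set of sequences `τ(x,u)` for `u ∈ A*`. -/
def SKernel {A : Type*} [LinearOrder A] {M : Type*} [Zero M]
    (L : Set (List A)) (rep : ℕ → List A) (x : ℕ → M) : Set (ℕ → M) :=
  {y | ∃ u : List A, y = tauS L rep x u}

/-- `L` is accepted by a deterministic finite automaton with finitely many states. -/
def IsRegularLang {A : Type*} (L : Set (List A)) : Prop :=
  ∃ (Q : Type) (_ : Fintype Q) (dfa : DFA A Q), ∀ w, w ∈ dfa.accepts ↔ w ∈ L

/-- The filtered kernel sequence `τ(x,u,D)`, which agrees with `τ(x,u)` at `n` when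
`D_h(rep_S(n)) = D` and is `0` otherwise. -/
noncomputable def tauFiltered {A : Type*} [LinearOrder A] {M : Type*} [Zero M]
    (L : Set (List A)) (rep : ℕ → List A) (x : ℕ → M) (h : ℕ) (u : List A)
    (D : Set (List A)) : ℕ → M :=
  fun n => if Dset L h (rep n) = D then tauS L rep x u n else 0

/-- The `h`-filtered `S`-kernel of `x`. -/
def filteredKernel {A : Type*} [LinearOrder A] {M : Type*} [Zero M]
    (L : Set (List A)) (rep : ℕ → List A) (x : ℕ → M) (h : ℕ) : Set (ℕ → M) :=
  {y | ∃ u : List A, ∃ D : Set (List A),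
    D ⊆ {v : List A | v.length ≤ h} ∧ y = tauFiltered L rep x h u D}

/-- Over a Noetherian ring, a submodule contained in a finitely generated submodule is
finitely generated (version for `AddCommMonoid`). -/
theorem aux_fg_of_le {R : Type*} [CommRing R] [IsNoetherianRing R]
    {M : Type*} [AddCommMonoid M] [Module R M] {N P : Submodule R M}
    (hN : N.FG) (hPN : P ≤ N) : P.FG := by
  obtain ⟨s, hs⟩ := hN
  let v : ↥(s : Set M) → M := fun i => (i : M)
  let f : (↥(s : Set M) → R) →ₗ[R] M := Fintype.linearCombination R v
  have hr : LinearMap.range f = Submodule.span R (s : Set M) := by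
    rw [Fintype.range_linearCombination]
    congr 1
    exact Subtype.range_coe
  have hle : P ≤ LinearMap.range f := by
    rw [hr, hs]; exact hPN
  have hmap : Submodule.map f (Submodule.comap f P) = P :=
    Submodule.map_comap_eq_self hle
  have hfg : (Submodule.comap f P).FG := IsNoetherian.noetherian _
  exact hmap ▸ hfg.map f

/-- Filtering at a fixed `D` is a linear operation on sequences. -/
noncomputable def filterMap {A : Type*} (R : Type*) [CommRing R]
    (M : Type*) [AddCommMonoid M] [Module R M]
    (L : Set (List A)) (rep : ℕ → List A) (h : ℕ) (D : Set (List A)) :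
    (ℕ → M) →ₗ[R] (ℕ → M) where
  toFun y := fun n => if Dset L h (rep n) = D then y n else 0
  map_add' y z := by
    funext n; by_cases hD : Dset L h (rep n) = D <;> simp [hD]
  map_smul' r y := by
    funext n; by_cases hD : Dset L h (rep n) = D <;> simp [hD]

theorem statement3 {A : Type*} [Fintype A] [LinearOrder A] (L : Set (List A))
    (hinf : L.Infinite) (hpc : PrefixClosed L) (hreg : IsRegularLang L)
    (R : Type*) [CommRing R] [IsNoetherianRing R]
    (M : Type*) [AddCommMonoid M] [Module R M]
    (x : ℕ → M) (rep : ℕ → List A)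
    (hrep : ∀ n, rep n ∈ L) (hval : ∀ n, valS L (rep n) = n) :
    (Submodule.span R (SKernel L rep x)).FG ↔
      ∀ h : ℕ, (Submodule.span R (filteredKernel L rep x h)).FG := by
  constructor
  · intro hFG h
    -- the collection of admissible `D` is finite
    have hEfin : {D : Set (List A) | D ⊆ {v : List A | v.length ≤ h}}.Finite :=
      (List.finite_length_le A h).finite_subsets
    set E : Finset (Set (List A)) := hEfin.toFinset with hE
    -- the big finitely generated module containing the span of the filtered kernel
    have hbig : (⨆ D ∈ E, Submodule.map (filterMap R M L rep h D)
        (Submodule.span R (SKernel L rep x))).FG :=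
      Submodule.fg_biSup E _ (fun D _ => hFG.map _)
    refine aux_fg_of_le hbig (Submodule.span_le.mpr ?_)
    rintro y ⟨u, D, hD, rfl⟩
    have hmem : tauFiltered L rep x h u D ∈
        Submodule.map (filterMap R M L rep h D) (Submodule.span R (SKernel L rep x)) := by
      refine ⟨tauS L rep x u, Submodule.subset_span ⟨u, rfl⟩, ?_⟩
      rfl
    exact Submodule.mem_iSup_of_mem D
      (Submodule.mem_iSup_of_mem (hEfin.mem_toFinset.mpr hD) hmem)
  · intro H
    refine aux_fg_of_le (H 0) (Submodule.span_le.mpr ?_)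
    rintro y ⟨u, rfl⟩
    refine Submodule.subset_span ⟨u, {([] : List A)}, ?_, ?_⟩
    · rintro v hv
      rw [Set.mem_singleton_iff] at hv
      simp [hv]
    · funext n
      have hDs : Dset L 0 (rep n) = {([] : List A)} := by
        ext v
        constructor
        · rintro ⟨hlen, -⟩
          simpa using List.length_eq_zero_iff.mp (Nat.le_zero.mp hlen)
        · rintro hv
          rw [Set.mem_singleton_iff] at hv
          subst hv
          exact ⟨le_refl 0, by simpa using hrep n⟩
      simp [tauFiltered, hDs]
end

section
/- Let S = (L,A,<) be an abstract numeration system built on an infinite prefix-closed (not necessarily regular) language L, let R be a commutative Noetherian ring, M an R-module, and x : ℕ → M a sequence. If the R-submodule of the module of sequences ℕ → M spanned by the S-kernel of x is finitely generated, then there exists an integer h ≥ 1 such that the tree T(L) decorated by d(w) = x(val_S(w)) is (R,h)-linear. -/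
open scoped Classical

section RadixAux

variable {A : Type*} [Fintype A] [LinearOrder A]

lemma radixLt_trans {u v w : List A} (h1 : radixLt u v) (h2 : radixLt v w) : radixLt u w := by
  rcases h1 with h1 | ⟨h1, h1'⟩ <;> rcases h2 with h2 | ⟨h2, h2'⟩
  · exact Or.inl (h1.trans h2)
  · exact Or.inl (h2 ▸ h1)
  · exact Or.inl (h1 ▸ h2)
  · exact Or.inr ⟨h1.trans h2, List.lex_trans lt_trans h1' h2'⟩

lemma radixLt_irrefl (u : List A) : ¬ radixLt u u := by
  rintro (h | ⟨-, h⟩)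
  · exact lt_irrefl _ h
  · exact irrefl_of (List.Lex (· < ·)) u h

lemma radixLt_trichot (u v : List A) : radixLt u v ∨ u = v ∨ radixLt v u := by
  haveI := List.Lex.trichotomous ((· < ·) : A → A → Prop)
  rcases lt_trichotomy u.length v.length with h | h | h
  · exact Or.inl (Or.inl h)
  · rcases trichotomous_of (List.Lex (· < ·)) u v with h' | h' | h'
    · exact Or.inl (Or.inr ⟨h, h'⟩)
    · exact Or.inr (Or.inl h')
    · exact Or.inr (Or.inr (Or.inr ⟨h.symm, h'⟩))
  · exact Or.inr (Or.inr (Or.inl h))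

lemma finite_radixLt (w : List A) : {v : List A | radixLt v w}.Finite := by
  apply (List.finite_length_le A w.length).subset
  rintro v (h | ⟨h, -⟩)
  · exact le_of_lt h
  · exact le_of_eq h

lemma valS_strictMono {L : Set (List A)} {w w' : List A} (hw : w ∈ L)
    (h : radixLt w w') : valS L w < valS L w' := by
  have htfin : {v | v ∈ L ∧ radixLt v w'}.Finite :=
    (finite_radixLt w').subset fun v hv => hv.2
  apply Set.ncard_lt_ncard _ htfin
  constructor
  · rintro v ⟨hv, hvw⟩
    exact ⟨hv, radixLt_trans hvw h⟩
  · intro hsub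
    exact radixLt_irrefl w (hsub ⟨hw, h⟩).2

lemma valS_inj {L : Set (List A)} {w w' : List A} (hw : w ∈ L) (hw' : w' ∈ L)
    (h : valS L w = valS L w') : w = w' := by
  rcases radixLt_trichot w w' with h' | h' | h'
  · exact absurd h (ne_of_lt (valS_strictMono hw h'))
  · exact h'
  · exact absurd h.symm (ne_of_lt (valS_strictMono hw' h'))

end RadixAux

theorem statement4 {A : Type*} [Fintype A] [LinearOrder A] (L : Set (List A))
    (hinf : L.Infinite) (hpc : PrefixClosed L)
    (R : Type*) [CommRing R] [IsNoetherianRing R]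
    (M : Type*) [AddCommMonoid M] [Module R M]
    (x : ℕ → M) (rep : ℕ → List A)
    (hrep : ∀ n, rep n ∈ L) (hval : ∀ n, valS L (rep n) = n)
    (hFG : (Submodule.span R (SKernel L rep x)).FG) :
    ∃ h : ℕ, 1 ≤ h ∧ IsLinear R L (fun w => x (valS L w)) h := by
  classical
  set τ := tauS L rep x with hτ
  have hrepval : ∀ w ∈ L, rep (valS L w) = w := fun w hw =>
    valS_inj (hrep _) hw (hval _)
  set K : ℕ → Submodule R (ℕ → M) :=
    fun j => Submodule.span R (τ '' {v : List A | v.length ≤ j}) with hK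
  have hKmono : Monotone K := fun i j hij =>
    Submodule.span_mono (Set.image_mono fun v hv => le_trans hv hij)
  have hcomp := (Submodule.fg_iff_compact _).mp hFG
  have hle : Submodule.span R (SKernel L rep x) ≤ ⨆ j : ℕ, K j := by
    apply Submodule.span_le.mpr
    rintro y ⟨u, rfl⟩
    exact Submodule.mem_iSup_of_mem u.length
      (Submodule.subset_span ⟨u, show u.length ≤ u.length from le_rfl, rfl⟩)
  obtain ⟨s, hs⟩ := CompleteLattice.IsCompactElement.exists_finset_of_le_iSup _ hcomp K hle
  set k := s.sup id with hk
  have hNK : Submodule.span R (SKernel L rep x) ≤ K k :=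
    hs.trans (iSup₂_le fun j hj => hKmono (Finset.le_sup (f := id) hj))
  have key : ∀ u : List A, ∃ l : List A →₀ R,
      (↑l.support ⊆ {v : List A | v.length ≤ k}) ∧
        Finsupp.linearCombination R τ l = τ u := by
    intro u
    have hmem : τ u ∈ K k :=
      hNK (Submodule.subset_span ⟨u, rfl⟩)
    rcases (Finsupp.mem_span_image_iff_linearCombination R).mp hmem with ⟨l, hl, hl2⟩
    exact ⟨l, (Finsupp.mem_supported R l).mp hl, hl2⟩
  choose l hlsupp hlcomb using key
  refine ⟨k + 1, Nat.le_add_left 1 k, fun _ u v => l u v, ?_⟩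
  intro w hw u hu hwu
  set n := valS L w with hn
  have hrw : rep n = w := hrepval w hw
  -- evaluate the linear combination at n
  have h2 := congrFun (hlcomb u) n
  rw [Finsupp.linearCombination_apply, Finsupp.sum] at h2
  have hsum : ((∑ v ∈ (l u).support, (l u) v • τ v) : ℕ → M) n
      = ∑ v ∈ (l u).support, (l u) v • τ v n := by
    simp [Finset.sum_apply]
  rw [hsum] at h2
  have hτn : ∀ v : List A, τ v n = if w ++ v ∈ L then x (valS L (w ++ v)) else 0 := by
    intro v; simp only [hτ, tauS, hrw]
  have hlhs : τ u n = x (valS L (w ++ u)) := by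
    rw [hτn u, if_pos hwu]
  -- the finite index set
  set S : Set (List A) := {v : List A | v.length < k + 1 ∧ w ++ v ∈ L} with hS
  have hSfin : S.Finite := (List.finite_length_lt A (k + 1)).subset fun v hv => hv.1
  have hcoe : S = ↑hSfin.toFinset := hSfin.coe_toFinset.symm
  show x (valS L (w ++ u)) = ∑ᶠ v ∈ S, (l u) v • x (valS L (w ++ v))
  rw [hcoe, finsum_mem_coe_finset]
  rw [← hlhs, ← h2]
  -- now both sides are finite sums
  have hstep : ∑ v ∈ (l u).support, (l u) v • τ v n
      = ∑ v ∈ (l u).support.filter (fun v => w ++ v ∈ L),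
          (l u) v • x (valS L (w ++ v)) := by
    rw [Finset.sum_filter]
    apply Finset.sum_congr rfl
    intro v _
    rw [hτn v]
    split_ifs with h
    · rfl
    · rw [smul_zero]
  rw [hstep]
  apply Finset.sum_subset
  · intro v hv
    rw [Finset.mem_filter] at hv
    rw [Set.Finite.mem_toFinset]
    refine ⟨Nat.lt_succ_of_le (hlsupp u hv.1), hv.2⟩
  · intro v hv hnv
    rw [Set.Finite.mem_toFinset] at hv
    rw [Finset.mem_filter, not_and] at hnv
    have : v ∉ (l u).support := fun hmem => hnv hmem hv.2
    rw [Finsupp.notMem_support_iff] at this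
    rw [this, zero_smul]
end

section
/- Let S = (L,A,<) be an abstract numeration system built on an infinite prefix-closed regular language L (accepted by a DFA with finitely many states), let R be a commutative Noetherian ring, M an R-module, and x : ℕ → M a sequence. If the tree T(L) decorated by d(w) = x(val_S(w)) is (R,h)-linear for some integer h ≥ 1, then x is (R,S)-regular, i.e., the R-submodule of the module of sequences ℕ → M spanned by the S-kernel of x is finitely generated. -/
open scoped Classical

theorem statement5 {A : Type*} [Fintype A] [LinearOrder A] (L : Set (List A))
    (hinf : L.Infinite) (hpc : PrefixClosed L) (hreg : IsRegularLang L)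
    (R : Type*) [CommRing R] [IsNoetherianRing R]
    (M : Type*) [AddCommMonoid M] [Module R M]
    (x : ℕ → M) (rep : ℕ → List A)
    (hrep : ∀ n, rep n ∈ L) (hval : ∀ n, valS L (rep n) = n)
    (h : ℕ) (hh : 1 ≤ h) (hlin : IsLinear R L (fun w => x (valS L w)) h) :
    (Submodule.span R (SKernel L rep x)).FG := by
  classical
  letI : AddCommGroup M := Module.addCommMonoidToAddCommGroup R
  obtain ⟨Q, instQ, dfa, hdfa⟩ := hreg
  obtain ⟨c, hc⟩ := hlin
  -- membership via states
  have memL : ∀ w v : List A, (w ++ v ∈ L ↔ dfa.evalFrom (dfa.eval w) v ∈ dfa.accept) := by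
    intro w v
    rw [← hdfa, DFA.mem_accepts]
    show dfa.evalFrom dfa.start (w ++ v) ∈ dfa.accept ↔ _
    rw [DFA.evalFrom_of_append]
    rfl
  -- the auxiliary family of sequences
  set F : Q → List A → (ℕ → M) := fun q u n =>
    if dfa.eval (rep n) = q ∧ rep n ++ u ∈ L then x (valS L (rep n ++ u)) else 0 with hF
  set G : Set (ℕ → M) :=
    (fun p : Q × List A => F p.1 p.2) '' (Set.univ ×ˢ {v | v.length < h}) with hG
  have hGfin : G.Finite :=
    Set.Finite.image _ (Set.Finite.prod Set.finite_univ (List.finite_length_lt A h))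
  -- key lemma : every F q u lies in the span of G
  have key : ∀ N : ℕ, ∀ u : List A, u.length ≤ N → ∀ q : Q,
      F q u ∈ Submodule.span R G := by
    intro N
    induction N with
    | zero =>
      intro u hu q
      exact Submodule.subset_span ⟨(q, u), ⟨trivial, show u.length < h by omega⟩, rfl⟩
    | succ N ih =>
      intro u hu q
      by_cases hlt : u.length < h
      · exact Submodule.subset_span ⟨(q, u), ⟨trivial, hlt⟩, rfl⟩
      · push_neg at hlt
        obtain ⟨u', s, hslen, rfl⟩ : ∃ u' s : List A, s.length = h ∧ u' ++ s = u :=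
          ⟨u.take (u.length - h), u.drop (u.length - h),
            by rw [List.length_drop]; omega, List.take_append_drop _ _⟩
        by_cases hacc : dfa.evalFrom q (u' ++ s) ∈ dfa.accept
        · set q' : Q := dfa.evalFrom q u' with hq'
          set V : Set (List A) := {v | v.length < h ∧ dfa.evalFrom q' v ∈ dfa.accept} with hV
          have hVfin : V.Finite := (List.finite_length_lt A h).subset fun v hv => hv.1
          set Dq : Set (List A) := {v | v.length ≤ h ∧ dfa.evalFrom q' v ∈ dfa.accept} with hDq
          have expand : F q (u' ++ s) = ∑ v ∈ hVfin.toFinset, c Dq s v • F q (u' ++ v) := by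
            funext n
            rw [show (∑ v ∈ hVfin.toFinset, c Dq s v • F q (u' ++ v)) n
                = ∑ v ∈ hVfin.toFinset, c Dq s v • F q (u' ++ v) n from by
              rw [Finset.sum_apply]; rfl]
            by_cases hq : dfa.eval (rep n) = q
            · have hmemu : rep n ++ (u' ++ s) ∈ L := by
                rw [memL, hq]; exact hacc
              have hmemu' : rep n ++ u' ∈ L := by
                apply hpc (rep n ++ u') s
                simpa using hmemu
              have hstate : ∀ v : List A,
                  ((rep n ++ u') ++ v ∈ L ↔ dfa.evalFrom q' v ∈ dfa.accept) := by
                intro v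
                rw [memL, hq']
                have heq : dfa.eval (rep n ++ u') = dfa.evalFrom q u' := by
                  show dfa.evalFrom dfa.start (rep n ++ u') = _
                  rw [DFA.evalFrom_of_append, ← hq]; rfl
                rw [heq]
              have hDset : Dset L h (rep n ++ u') = Dq := by
                ext v; simp only [Dset, hDq, Set.mem_setOf_eq, hstate v]
              have hVset : {v : List A | v.length < h ∧ (rep n ++ u') ++ v ∈ L} = V := by
                ext v; simp only [hV, Set.mem_setOf_eq, hstate v]
              have hlin' := hc (rep n ++ u') hmemu' s hslen
                (by simpa using hmemu)
              dsimp only at hlin'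
              rw [hDset, hVset] at hlin'
              have hLHS : F q (u' ++ s) n = x (valS L ((rep n ++ u') ++ s)) := by
                show (if dfa.eval (rep n) = q ∧ rep n ++ (u' ++ s) ∈ L
                    then x (valS L (rep n ++ (u' ++ s))) else 0) = _
                rw [if_pos (show dfa.eval (rep n) = q ∧ rep n ++ (u' ++ s) ∈ L from ⟨hq, hmemu⟩)]
                exact congrArg (fun w => x (valS L w)) (List.append_assoc _ _ _).symm
              rw [hLHS, hlin', finsum_mem_eq_finite_toFinset_sum _ hVfin]
              apply Finset.sum_congr rfl
              intro v hv
              rw [Set.Finite.mem_toFinset] at hv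
              have hmemv : rep n ++ (u' ++ v) ∈ L := by
                simpa using (hstate v).mpr hv.2
              have hFv : F q (u' ++ v) n = x (valS L ((rep n ++ u') ++ v)) := by
                show (if dfa.eval (rep n) = q ∧ rep n ++ (u' ++ v) ∈ L
                    then x (valS L (rep n ++ (u' ++ v))) else 0) = _
                rw [if_pos (show dfa.eval (rep n) = q ∧ rep n ++ (u' ++ v) ∈ L from ⟨hq, hmemv⟩)]
                exact congrArg (fun w => x (valS L w)) (List.append_assoc _ _ _).symm
              rw [hFv]
            · have hzero : ∀ w : List A, F q w n = 0 := by
                intro w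
                show (if dfa.eval (rep n) = q ∧ rep n ++ w ∈ L
                    then x (valS L (rep n ++ w)) else 0) = 0
                exact if_neg fun hcon => hq hcon.1
              simp only [hzero, smul_zero, Finset.sum_const_zero]
          rw [expand]
          refine Submodule.sum_mem _ fun v hv => Submodule.smul_mem _ _ ?_
          rw [Set.Finite.mem_toFinset] at hv
          apply ih
          have h1 := hv.1
          have h2 : u'.length + s.length ≤ N + 1 := by
            rw [← List.length_append]; exact hu
          rw [List.length_append]
          omega
        · have hz : F q (u' ++ s) = 0 := by
            funext n
            show (if dfa.eval (rep n) = q ∧ rep n ++ (u' ++ s) ∈ L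
                then x (valS L (rep n ++ (u' ++ s))) else 0) = (0 : ℕ → M) n
            rw [Pi.zero_apply]
            refine if_neg ?_
            rintro ⟨h1, h2⟩
            rw [memL, h1] at h2
            exact hacc h2
          rw [hz]
          exact Submodule.zero_mem _
  -- span of the kernel is contained in span of G
  have hle : Submodule.span R (SKernel L rep x) ≤ Submodule.span R G := by
    rw [Submodule.span_le]
    rintro y ⟨u, rfl⟩
    have htau : tauS L rep x u = ∑ q : Q, F q u := by
      funext n
      rw [show (∑ q : Q, F q u) n = ∑ q : Q, F q u n from by rw [Finset.sum_apply]]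
      have hFn : ∀ q : Q, F q u n
          = if dfa.eval (rep n) = q
            then (if rep n ++ u ∈ L then x (valS L (rep n ++ u)) else 0) else 0 := by
        intro q
        show (if dfa.eval (rep n) = q ∧ rep n ++ u ∈ L
            then x (valS L (rep n ++ u)) else 0) = _
        by_cases h1 : dfa.eval (rep n) = q <;> by_cases h2 : rep n ++ u ∈ L <;>
          simp [h1, h2]
      simp only [hFn, Finset.sum_ite_eq, Finset.mem_univ, if_true]
      rfl
    rw [htau]
    exact Submodule.sum_mem _ fun q _ => key u.length u le_rfl q
  -- conclude with Noetherianity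
  have hfg : (Submodule.span R G).FG := Submodule.fg_span hGfin
  have hnoeth : IsNoetherian R (Submodule.span R G) :=
    isNoetherian_of_fg_of_noetherian _ hfg
  have h1 : ((Submodule.span R (SKernel L rep x)).comap (Submodule.span R G).subtype).FG :=
    IsNoetherian.noetherian _
  have h2 := Submodule.FG.map (Submodule.span R G).subtype h1
  rwa [Submodule.map_comap_subtype, inf_eq_right.mpr hle] at h2
end

section
/- Let S = (L,A,<) be an abstract numeration system built on an infinite prefix-closed regular language L (accepted by a DFA with finitely many states), let R be a commutative Noetherian ring, M an R-module, and x : ℕ → M a sequence. Then x is (R,S)-regular if and only if there exists an integer h ≥ 1 such that the tree T(L) decorated by d(w) = x(val_S(w)) is (R,h)-linear. -/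
open scoped Classical

section RadixAux

set_option linter.unusedSectionVars false

variable {A : Type*} [Fintype A] [LinearOrder A]

lemma radixLt_total {u v : List A} (h : u ≠ v) : radixLt u v ∨ radixLt v u := by
  rcases lt_trichotomy u.length v.length with hl | hl | hl
  · exact Or.inl (Or.inl hl)
  · haveI : IsTrichotomous (List A) (List.Lex (· < ·)) := List.Lex.trichotomous _
    rcases trichotomous_of (List.Lex (· < ·)) u v with hx | hx | hx
    · exact Or.inl (Or.inr ⟨hl, hx⟩)
    · exact absurd hx h
    · exact Or.inr (Or.inr ⟨hl.symm, hx⟩)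
  · exact Or.inr (Or.inl hl)

lemma radixLt_length_le {u v : List A} (h : radixLt u v) : u.length ≤ v.length := by
  rcases h with h | ⟨h, -⟩
  · exact h.le
  · exact h.le

lemma radix_set_finite (L : Set (List A)) (w : List A) :
    {v : List A | v ∈ L ∧ radixLt v w}.Finite :=
  (List.finite_length_le A w.length).subset fun v hv => radixLt_length_le hv.2

lemma valS_strict_mono {L : Set (List A)} {u v : List A} (hu : u ∈ L) (h : radixLt u v) :
    valS L u < valS L v := by
  apply Set.ncard_lt_ncard _ (radix_set_finite L v)
  constructor
  · rintro z ⟨hz, hr⟩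
    exact ⟨hz, radixLt_trans hr h⟩
  · intro hsub
    exact radixLt_irrefl u (hsub ⟨hu, h⟩).2

lemma valS_injOn {L : Set (List A)} {u v : List A} (hu : u ∈ L) (hv : v ∈ L)
    (h : valS L u = valS L v) : u = v := by
  by_contra hne
  rcases radixLt_total hne with hr | hr
  · exact absurd h (valS_strict_mono hu hr).ne
  · exact absurd h.symm (valS_strict_mono hv hr).ne

lemma rep_valS {L : Set (List A)} {rep : ℕ → List A}
    (hrep : ∀ n, rep n ∈ L) (hval : ∀ n, valS L (rep n) = n) {w : List A} (hw : w ∈ L) :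
    rep (valS L w) = w :=
  valS_injOn (hrep _) hw (hval _)

end RadixAux

theorem statement6 {A : Type*} [Fintype A] [LinearOrder A] (L : Set (List A))
    (hinf : L.Infinite) (hpc : PrefixClosed L) (hreg : IsRegularLang L)
    (R : Type*) [CommRing R] [IsNoetherianRing R]
    (M : Type*) [AddCommMonoid M] [Module R M]
    (x : ℕ → M) (rep : ℕ → List A)
    (hrep : ∀ n, rep n ∈ L) (hval : ∀ n, valS L (rep n) = n) :
    (Submodule.span R (SKernel L rep x)).FG ↔
      ∃ h : ℕ, 1 ≤ h ∧ IsLinear R L (fun w => x (valS L w)) h := by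
  constructor
  · -- Forward: finitely generated kernel ⇒ linearity of the decorated tree
    intro hFG
    obtain ⟨F, hF⟩ := hFG
    -- find a finite subset T of the kernel spanning the same submodule
    have key : ∀ y ∈ F, ∃ T : Finset (ℕ → M),
        ↑T ⊆ SKernel L rep x ∧ y ∈ Submodule.span R (T : Set (ℕ → M)) := by
      intro y hy
      have hy' : y ∈ Submodule.span R (SKernel L rep x) := by
        rw [← hF]; exact Submodule.subset_span hy
      exact Submodule.mem_span_finite_of_mem_span hy'
    choose t ht hyt using key
    set T : Finset (ℕ → M) := F.attach.biUnion (fun y => t y.1 y.2) with hT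
    have hTsub : (T : Set (ℕ → M)) ⊆ SKernel L rep x := by
      intro z hz
      rw [hT, Finset.coe_biUnion] at hz
      obtain ⟨y, -, hzy⟩ := Set.mem_iUnion₂.mp hz
      exact ht y.1 y.2 hzy
    have hspanT : Submodule.span R (SKernel L rep x) ≤ Submodule.span R (T : Set (ℕ → M)) := by
      rw [← hF]
      apply Submodule.span_le.mpr
      intro y hy
      have : Submodule.span R ((t y hy : Finset (ℕ → M)) : Set (ℕ → M)) ≤
          Submodule.span R (T : Set (ℕ → M)) := by
        apply Submodule.span_mono
        intro z hz
        rw [hT, Finset.coe_biUnion]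
        exact Set.mem_iUnion₂.mpr ⟨⟨y, hy⟩, F.mem_attach _, hz⟩
      exact this (hyt y hy)
    -- choose representing words for elements of the kernel
    have hwrd : ∀ z : ℕ → M, ∃ u : List A, z ∈ SKernel L rep x → z = tauS L rep x u := by
      intro z
      by_cases hz : z ∈ SKernel L rep x
      · obtain ⟨u, hu⟩ := hz; exact ⟨u, fun _ => hu⟩
      · exact ⟨[], fun h => absurd h hz⟩
    choose wrd hwrd using hwrd
    set h : ℕ := T.sup (fun z => (wrd z).length) + 1 with hh
    have hlen : ∀ z ∈ T, (wrd z).length < h := by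
      intro z hz
      exact Nat.lt_succ_of_le (Finset.le_sup (f := fun z => (wrd z).length) hz)
    -- the coefficients
    have hmem : ∀ u : List A, ∃ f : (ℕ → M) → R,
        ∑ z ∈ T, f z • z = tauS L rep x u := by
      intro u
      obtain ⟨f, -, hf⟩ := Submodule.mem_span_finset.mp
        (hspanT (Submodule.subset_span ⟨u, rfl⟩))
      exact ⟨f, hf⟩
    choose f hf using hmem
    refine ⟨h, Nat.le_add_left 1 _, fun _ u v => ∑ z ∈ T.filter (fun z => wrd z = v), f u z, ?_⟩
    intro w hw u hu hwu
    set n : ℕ := valS L w with hn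
    have hrepn : rep n = w := rep_valS hrep hval hw
    -- finite set of relevant words v
    have hVfin : {v : List A | v.length < h ∧ w ++ v ∈ L}.Finite :=
      (List.finite_length_lt A h).subset fun v hv => hv.1
    rw [show {v : List A | v.length < h ∧ w ++ v ∈ L} = ↑hVfin.toFinset by
          rw [Set.Finite.coe_toFinset]]
    rw [finsum_mem_coe_finset]
    have step1 : ∀ v ∈ hVfin.toFinset,
        (∑ z ∈ T.filter (fun z => wrd z = v), f u z) • x (valS L (w ++ v)) =
          ∑ z ∈ T.filter (fun z => wrd z = v), f u z • z n := by
      intro v hv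
      rw [Set.Finite.mem_toFinset] at hv
      rw [Finset.sum_smul]
      apply Finset.sum_congr rfl
      intro z hz
      rw [Finset.mem_filter] at hz
      have hz' : z = tauS L rep x (wrd z) := hwrd z (hTsub hz.1)
      congr 1
      rw [hz', tauS, hrepn, hz.2, if_pos hv.2]
    calc (fun w => x (valS L w)) (w ++ u)
        = tauS L rep x u n := by
          rw [tauS, hrepn, if_pos hwu]
      _ = (∑ z ∈ T, f u z • z) n := by rw [hf]
      _ = ∑ z ∈ T, f u z • z n := by
          rw [Finset.sum_apply]; rfl
      _ = ∑ z ∈ T.filter (fun z => wrd z ∈ hVfin.toFinset), f u z • z n := by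
          symm
          apply Finset.sum_subset (Finset.filter_subset _ _)
          intro z hz hz'
          rw [Finset.mem_filter, not_and] at hz'
          have hznot : wrd z ∉ hVfin.toFinset := hz' hz
          rw [Set.Finite.mem_toFinset] at hznot
          have : ¬ (w ++ wrd z ∈ L) := fun hmem => hznot ⟨hlen z hz, hmem⟩
          have hz2 : z = tauS L rep x (wrd z) := hwrd z (hTsub hz)
          rw [hz2, tauS, hrepn, if_neg this, smul_zero]
      _ = ∑ v ∈ hVfin.toFinset, ∑ z ∈ T.filter (fun z => wrd z = v), f u z • z n :=
          (Finset.sum_fiberwise_eq_sum_filter T hVfin.toFinset wrd (fun z => f u z • z n)).symm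
      _ = ∑ v ∈ hVfin.toFinset,
            (∑ z ∈ T.filter (fun z => wrd z = v), f u z) • (fun w => x (valS L w)) (w ++ v) := by
          apply Finset.sum_congr rfl
          intro v hv
          rw [step1 v hv]
  · -- Backward: linearity ⇒ finitely generated kernel
    rintro ⟨h, hh1, c, hc⟩
    obtain ⟨Q, hQfin, dfa, hdfa⟩ := hreg
    haveI := hQfin
    have hL : ∀ w : List A, w ∈ L ↔ dfa.eval w ∈ dfa.accept :=
      fun w => (hdfa w).symm.trans dfa.mem_accepts
    set Vf : Finset (List A) := (List.finite_length_lt A h).toFinset with hVf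
    have hVfmem : ∀ v : List A, v ∈ Vf ↔ v.length < h := by
      intro v; rw [hVf, Set.Finite.mem_toFinset]; rfl
    -- indicator linear maps
    let ind : Q → (ℕ → M) →ₗ[R] (ℕ → M) := fun q =>
      { toFun := fun y n => if dfa.eval (rep n) = q then y n else 0
        map_add' := by
          intro y z; funext n
          by_cases hq : dfa.eval (rep n) = q <;> simp [hq]
        map_smul' := by
          intro r y; funext n
          by_cases hq : dfa.eval (rep n) = q <;> simp [hq] }
    set G : Set (ℕ → M) :=
      ⋃ q : Q, (fun v => ind q (tauS L rep x v)) '' ↑Vf with hG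
    have hGfin : G.Finite := Set.finite_iUnion fun q => Vf.finite_toSet.image _
    have hGfg : (Submodule.span R G).FG := Submodule.fg_def.mpr ⟨G, hGfin, rfl⟩
    -- the indicator maps preserve span G
    have hind : ∀ (q : Q) (y : ℕ → M), y ∈ Submodule.span R G →
        ind q y ∈ Submodule.span R G := by
      intro q y hy
      have hmap : Submodule.map (ind q) (Submodule.span R G) ≤ Submodule.span R G := by
        rw [Submodule.map_span]
        apply Submodule.span_le.mpr
        rintro _ ⟨z, hz, rfl⟩
        rw [hG] at hz
        obtain ⟨q', hq'⟩ := Set.mem_iUnion.mp hz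
        obtain ⟨v, hv, rfl⟩ := hq'
        by_cases hqq : q' = q
        · subst hqq
          have : ind q' (ind q' (tauS L rep x v)) = ind q' (tauS L rep x v) := by
            funext n
            simp only [ind, LinearMap.coe_mk, AddHom.coe_mk]
            by_cases hq : dfa.eval (rep n) = q' <;> simp [hq]
          rw [this]
          exact Submodule.subset_span (Set.mem_iUnion.mpr ⟨q', ⟨v, hv, rfl⟩⟩)
        · have : ind q (ind q' (tauS L rep x v)) = 0 := by
            funext n
            simp only [ind, LinearMap.coe_mk, AddHom.coe_mk]
            by_cases hq : dfa.eval (rep n) = q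
            · rw [if_pos hq, if_neg (by rw [hq]; exact fun hcon => hqq hcon.symm)]; rfl
            · rw [if_neg hq]; rfl
          rw [this]
          exact Submodule.zero_mem _
      exact hmap ⟨y, hy, rfl⟩
    -- small words
    have hsmall : ∀ u : List A, u.length < h → tauS L rep x u ∈ Submodule.span R G := by
      intro u hu
      have : tauS L rep x u = ∑ q : Q, ind q (tauS L rep x u) := by
        funext n
        rw [Finset.sum_apply]
        simp only [ind, LinearMap.coe_mk, AddHom.coe_mk]
        rw [Finset.sum_ite_eq Finset.univ (dfa.eval (rep n))
          (fun _ => tauS L rep x u n), if_pos (Finset.mem_univ _)]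
      rw [this]
      apply Submodule.sum_mem
      intro q _
      exact Submodule.subset_span
        (Set.mem_iUnion.mpr ⟨q, ⟨u, (hVfmem u).mpr hu, rfl⟩⟩)
    -- main induction on the length of u
    have main : ∀ (k : ℕ) (u : List A), u.length ≤ k →
        tauS L rep x u ∈ Submodule.span R G := by
      intro k
      induction k with
      | zero =>
        intro u hu
        exact hsmall u (by omega)
      | succ k ih =>
        intro u hu
        by_cases hlt : u.length < h
        · exact hsmall u hlt
        · push_neg at hlt
          set p : List A := u.take (u.length - h) with hp
          set s : List A := u.drop (u.length - h) with hs
          have hps : p ++ s = u := List.take_append_drop _ _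
          have hslen : s.length = h := by
            rw [hs, List.length_drop]; omega
          have hplen : p.length = u.length - h := by
            rw [hp, List.length_take]; omega
          -- abstract coefficients depending on the state only
          set c' : Q → List A → R := fun q v =>
            if dfa.evalFrom q u ∈ dfa.accept then
              c {v' : List A | v'.length ≤ h ∧
                  dfa.evalFrom (dfa.evalFrom q p) v' ∈ dfa.accept} s v
            else 0 with hc'
          have key : tauS L rep x u =
              ∑ q : Q, ∑ v ∈ Vf, c' q v • ind q (tauS L rep x (p ++ v)) := by
            funext n
            have hRHS : (∑ q : Q, ∑ v ∈ Vf, c' q v • ind q (tauS L rep x (p ++ v))) n =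
                ∑ v ∈ Vf, c' (dfa.eval (rep n)) v • tauS L rep x (p ++ v) n := by
              rw [Finset.sum_apply]
              rw [Finset.sum_eq_single (dfa.eval (rep n))]
              · rw [Finset.sum_apply]
                apply Finset.sum_congr rfl
                intro v hv
                simp only [Pi.smul_apply, ind, LinearMap.coe_mk, AddHom.coe_mk]
                simp
              · intro q _ hq
                rw [Finset.sum_apply]
                apply Finset.sum_eq_zero
                intro v hv
                simp only [Pi.smul_apply, ind, LinearMap.coe_mk, AddHom.coe_mk]
                rw [if_neg (fun hcon => hq hcon.symm)]
                exact smul_zero _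
              · intro hq0mem
                exact absurd (Finset.mem_univ _) hq0mem
            rw [hRHS]
            have hevalwu : dfa.eval (rep n ++ u) = dfa.evalFrom (dfa.eval (rep n)) u :=
              dfa.evalFrom_of_append _ _ _
            by_cases hwu : rep n ++ u ∈ L
            · -- the accepting case : use the linearity relation at (rep n) ++ p
              have hacc : dfa.evalFrom (dfa.eval (rep n)) u ∈ dfa.accept := by
                rw [← hevalwu]; exact (hL _).mp hwu
              have hwpL : rep n ++ p ∈ L := by
                apply hpc (rep n ++ p) s
                rw [List.append_assoc, hps]; exact hwu
              have hwpsL : (rep n ++ p) ++ s ∈ L := by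
                rw [List.append_assoc, hps]; exact hwu
              have hrel := hc (rep n ++ p) hwpL s hslen hwpsL
              beta_reduce at hrel
              have hDset : Dset L h (rep n ++ p) =
                  {v' : List A | v'.length ≤ h ∧
                    dfa.evalFrom (dfa.evalFrom (dfa.eval (rep n)) p) v' ∈ dfa.accept} := by
                ext v'
                simp only [Dset, Set.mem_setOf_eq]
                have heq : dfa.eval ((rep n ++ p) ++ v') =
                    dfa.evalFrom (dfa.evalFrom (dfa.eval (rep n)) p) v' := by
                  simp only [DFA.eval]
                  rw [show (rep n ++ p) ++ v' = rep n ++ (p ++ v') from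
                      (List.append_assoc _ _ _),
                    dfa.evalFrom_of_append, dfa.evalFrom_of_append]
                constructor
                · rintro ⟨h1, h2⟩
                  exact ⟨h1, heq ▸ (hL _).mp h2⟩
                · rintro ⟨h1, h2⟩
                  exact ⟨h1, (hL _).mpr (heq ▸ h2)⟩
              have hsetfin : {v : List A | v.length < h ∧ (rep n ++ p) ++ v ∈ L} =
                  ↑(Vf.filter (fun v => (rep n ++ p) ++ v ∈ L)) := by
                ext v
                simp only [Set.mem_setOf_eq, Finset.coe_filter, hVfmem]
              rw [hsetfin, finsum_mem_coe_finset] at hrel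
              have hLHS : tauS L rep x u n = x (valS L ((rep n ++ p) ++ s)) := by
                simp only [tauS]
                rw [if_pos hwu]
                congr 2
                rw [List.append_assoc, hps]
              rw [hLHS, hrel, Finset.sum_filter]
              apply Finset.sum_congr rfl
              intro v hv
              have hcv : c' (dfa.eval (rep n)) v = c (Dset L h (rep n ++ p)) s v := by
                rw [hc']
                simp only []
                rw [if_pos hacc, hDset]
              have htau : tauS L rep x (p ++ v) n =
                  if (rep n ++ p) ++ v ∈ L then x (valS L ((rep n ++ p) ++ v)) else 0 := by
                simp only [tauS]
                rw [show rep n ++ (p ++ v) = (rep n ++ p) ++ v from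
                  (List.append_assoc _ _ _).symm]
              by_cases hvL : (rep n ++ p) ++ v ∈ L
              · rw [if_pos hvL, hcv, htau, if_pos hvL]
              · rw [if_neg hvL, hcv, htau, if_neg hvL, smul_zero]
            · -- the non-accepting case : both sides vanish
              have hnacc : dfa.evalFrom (dfa.eval (rep n)) u ∉ dfa.accept := by
                rw [← hevalwu]; exact fun hcon => hwu ((hL _).mpr hcon)
              have hLHS : tauS L rep x u n = 0 := by
                simp only [tauS]
                rw [if_neg hwu]
              rw [hLHS]
              symm
              apply Finset.sum_eq_zero
              intro v hv
              rw [hc']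
              simp only []
              rw [if_neg hnacc, zero_smul]
          rw [key]
          apply Submodule.sum_mem
          intro q _
          apply Submodule.sum_mem
          intro v hv
          apply Submodule.smul_mem
          apply hind
          apply ih
          have hv' : v.length < h := (hVfmem v).mp hv
          rw [List.length_append, hplen]
          omega
    have hle : Submodule.span R (SKernel L rep x) ≤ Submodule.span R G := by
      apply Submodule.span_le.mpr
      rintro y ⟨u, rfl⟩
      exact main u.length u le_rfl
    -- conclude by Noetherianity
    letI : AddCommGroup (ℕ → M) := Module.addCommMonoidToAddCommGroup R
    haveI : IsNoetherian R (Submodule.span R G) :=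
      isNoetherian_of_fg_of_noetherian _ hGfg
    have hfg' : (Submodule.comap (Submodule.span R G).subtype
        (Submodule.span R (SKernel L rep x))).FG := IsNoetherian.noetherian _
    have hmapped := hfg'.map (Submodule.span R G).subtype
    rwa [Submodule.map_comap_subtype, inf_eq_right.mpr hle] at hmapped
end

section
/- The sequence (n²)_{n≥0} is (ℚ,3/2)-regular: there exists an integer h ≥ 1 such that the tree T(L_{3/2}) decorated by d(w) = (val_{3/2}(w))² ∈ ℚ is (ℚ,h)-linear. -/
open scoped Classical

/-- `valPQ p q w` is the value in base `p/q` of the word `w`, namely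
`valPQ p q ε = 0` and `valPQ p q (wa) = (p·valPQ p q w + a)/q`. -/
def valPQ (p q : ℕ) (w : List (Fin p)) : ℚ :=
  w.foldl (fun acc a => ((p : ℚ) * acc + (a.val : ℚ)) / (q : ℚ)) 0

/-- The base-`p/q` numeration language: words with nonzero leading digit all of whose
prefixes have a value in `ℕ`. -/
def Lpq (p q : ℕ) : Set (List (Fin p)) :=
  {w | (∀ a, w.head? = some a → a.val ≠ 0) ∧
       ∀ u, u <+: w → ∃ n : ℕ, valPQ p q u = (n : ℚ)}

/-- The decoration of `T(L_{p/q})` induced by a sequence `x`: the node `w` carries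
`x(val_{p/q}(w))` (for `w ∈ L_{p/q}` the value `val_{p/q}(w)` is a natural number). -/
noncomputable def decSeq {M : Type*} (p q : ℕ) (x : ℕ → M) : List (Fin p) → M :=
  fun w => x (valPQ p q w).num.toNat

/-- A sequence is `(R,p/q)`-regular if the decorated tree `T_x(L_{p/q})` is
`(R,h)`-linear for some `h ≥ 1`. -/
def PQRegular {M : Type*} (R : Type*) [CommRing R] [AddCommMonoid M] [Module R M]
    (p q : ℕ) (x : ℕ → M) : Prop :=
  ∃ h : ℕ, 1 ≤ h ∧ IsLinear R (Lpq p q) (decSeq p q x) h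

/-! ### Auxiliary lemmas -/

lemma valPQ_aux (v : List (Fin 3)) : ∀ r : ℚ,
    v.foldl (fun acc a => (((3:ℕ) : ℚ) * acc + (a.val : ℚ)) / ((2:ℕ) : ℚ)) r
      = (3/2)^v.length * r + valPQ 3 2 v := by
  induction v with
  | nil => intro r; simp [valPQ]
  | cons a v ih =>
    intro r
    have h1 := ih ((((3:ℕ):ℚ) * r + (a.val:ℚ)) / ((2:ℕ):ℚ))
    have h2 := ih ((((3:ℕ):ℚ) * 0 + (a.val:ℚ)) / ((2:ℕ):ℚ))
    have hv : valPQ 3 2 (a :: v)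
        = v.foldl (fun acc a => (((3:ℕ) : ℚ) * acc + (a.val : ℚ)) / ((2:ℕ) : ℚ))
            ((((3:ℕ):ℚ) * 0 + (a.val:ℚ)) / ((2:ℕ):ℚ)) := rfl
    simp only [List.foldl_cons, List.length_cons, hv, h1, h2]
    push_cast
    ring

lemma valPQ_append (w v : List (Fin 3)) :
    valPQ 3 2 (w ++ v) = (3/2:ℚ)^v.length * valPQ 3 2 w + valPQ 3 2 v := by
  have : valPQ 3 2 (w ++ v)
      = v.foldl (fun acc a => (((3:ℕ) : ℚ) * acc + (a.val : ℚ)) / ((2:ℕ) : ℚ))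
          (valPQ 3 2 w) := by
    simp [valPQ, List.foldl_append]
  rw [this, valPQ_aux]

lemma prefix_snoc {α} {u w : List α} {a : α} (h : u <+: w ++ [a]) :
    u <+: w ∨ u = w ++ [a] := by
  rcases Nat.lt_or_ge u.length (w ++ [a]).length with hl | hl
  · left
    rw [List.isPrefix_append_of_length ?_] at h
    · exact h
    · simpa using Nat.lt_succ_iff.mp (by simpa using hl)
  · right
    exact h.eq_of_length (le_antisymm h.length_le (by simpa using hl))

lemma mem_snoc (w : List (Fin 3)) (hw : w ∈ Lpq 3 2) (a : Fin 3)
    (hhead : w = [] → a.val ≠ 0) (k : ℕ)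
    (hk : 3 * valPQ 3 2 w + (a.val:ℚ) = 2 * k) : w ++ [a] ∈ Lpq 3 2 := by
  obtain ⟨hh, hp⟩ := hw
  constructor
  · intro b hb
    cases w with
    | nil =>
      simp at hb
      exact hb ▸ hhead rfl
    | cons c w' =>
      simp at hb
      exact hb ▸ hh c rfl
  · intro u hu
    rcases prefix_snoc hu with h | rfl
    · exact hp u h
    · refine ⟨k, ?_⟩
      rw [valPQ_append]
      have : valPQ 3 2 [a] = (a.val : ℚ) / 2 := by
        simp [valPQ]
      rw [this]
      simp only [List.length_singleton, pow_one]
      linarith [hk]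

def Pprop (D : Set (List (Fin 3))) (u : List (Fin 3)) (g : List (Fin 3) → ℚ) : Prop :=
  ∀ w ∈ Lpq 3 2, Dset (Lpq 3 2) 3 w = D → w ++ u ∈ Lpq 3 2 →
    (valPQ 3 2 (w ++ u))^2 =
      ∑ᶠ v ∈ {v : List (Fin 3) | v.length < 3 ∧ w ++ v ∈ Lpq 3 2},
        g v • (valPQ 3 2 (w ++ v))^2

lemma key (w : List (Fin 3)) (u t1 t2 t3 : List (Fin 3))
    (h1 : t1.length < 3) (h2 : t2.length < 3) (h3 : t3.length < 3)
    (m1 : w ++ t1 ∈ Lpq 3 2) (m2 : w ++ t2 ∈ Lpq 3 2) (m3 : w ++ t3 ∈ Lpq 3 2)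
    (d12 : t1 ≠ t2) (d13 : t1 ≠ t3) (d23 : t2 ≠ t3)
    (a1 a2 a3 : ℚ)
    (heq : ∀ x : ℚ,
      ((3/2:ℚ)^u.length * x + valPQ 3 2 u)^2 =
        a1 * ((3/2:ℚ)^t1.length * x + valPQ 3 2 t1)^2
      + a2 * ((3/2:ℚ)^t2.length * x + valPQ 3 2 t2)^2
      + a3 * ((3/2:ℚ)^t3.length * x + valPQ 3 2 t3)^2) :
    ∃ g, Pprop (Dset (Lpq 3 2) 3 w) u g := by
  classical
  refine ⟨fun v => if v = t1 then a1 else if v = t2 then a2 else if v = t3 then a3 else 0,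
    ?_⟩
  intro w' hw' hD hwu
  set g : List (Fin 3) → ℚ :=
    fun v => if v = t1 then a1 else if v = t2 then a2 else if v = t3 then a3 else 0 with hg
  have mem' : ∀ t : List (Fin 3), t.length < 3 → w ++ t ∈ Lpq 3 2 → w' ++ t ∈ Lpq 3 2 := by
    intro t ht hm
    have : t ∈ Dset (Lpq 3 2) 3 w' := by
      rw [hD]; exact ⟨ht.le, hm⟩
    exact this.2
  have e1 := mem' t1 h1 m1
  have e2 := mem' t2 h2 m2
  have e3 := mem' t3 h3 m3
  set F : List (Fin 3) → ℚ := fun v => g v • (valPQ 3 2 (w' ++ v))^2 with hF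
  have hsupp : {v : List (Fin 3) | v.length < 3 ∧ w' ++ v ∈ Lpq 3 2} ∩ Function.support F
      = ↑({t1, t2, t3} : Finset (List (Fin 3))) ∩ Function.support F := by
    ext v
    simp only [Set.mem_inter_iff, Function.mem_support, Set.mem_setOf_eq, Finset.coe_insert,
      Set.mem_insert_iff, Finset.coe_singleton, Set.mem_singleton_iff]
    constructor
    · rintro ⟨-, hFv⟩
      refine ⟨?_, hFv⟩
      by_contra hv
      push_neg at hv
      apply hFv
      simp [hF, hg, if_neg hv.1, if_neg hv.2.1, if_neg hv.2.2]
    · rintro ⟨hv, hFv⟩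
      refine ⟨?_, hFv⟩
      rcases hv with rfl | rfl | rfl
      exacts [⟨h1, e1⟩, ⟨h2, e2⟩, ⟨h3, e3⟩]
  have hsum : ∑ᶠ v ∈ {v : List (Fin 3) | v.length < 3 ∧ w' ++ v ∈ Lpq 3 2}, F v
      = ∑ v ∈ ({t1, t2, t3} : Finset (List (Fin 3))), F v :=
    finsum_mem_eq_sum_of_inter_support_eq F hsupp
  show (valPQ 3 2 (w' ++ u))^2
      = ∑ᶠ v ∈ {v : List (Fin 3) | v.length < 3 ∧ w' ++ v ∈ Lpq 3 2}, F v
  rw [hsum]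
  rw [Finset.sum_insert (by simp [d12, d13]),
      Finset.sum_insert (by simp [d23]), Finset.sum_singleton]
  have gt1 : g t1 = a1 := by simp [hg]
  have gt2 : g t2 = a2 := by simp [hg, if_neg (Ne.symm d12)]
  have gt3 : g t3 = a3 := by simp [hg, if_neg (Ne.symm d13), if_neg (Ne.symm d23)]
  simp only [hF, gt1, gt2, gt3, smul_eq_mul]
  rw [valPQ_append, valPQ_append, valPQ_append, valPQ_append]
  linarith [heq (valPQ 3 2 w')]

lemma main (w : List (Fin 3)) (hw : w ∈ Lpq 3 2) (u : List (Fin 3)) (hu : u.length = 3) :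
    ∃ g, Pprop (Dset (Lpq 3 2) 3 w) u g := by
  obtain ⟨n, hn⟩ := hw.2 w (List.prefix_refl w)
  have hwnil : w ++ [] ∈ Lpq 3 2 := by simpa using hw
  set t : ℚ := valPQ 3 2 u with ht
  by_cases hwe : w = []
  · -- root case: use ε, [2], [2,1]
    have hn0 : valPQ 3 2 w = 0 := by rw [hwe]; norm_num [valPQ]
    have m2 : w ++ [2] ∈ Lpq 3 2 :=
      mem_snoc w hw 2 (fun _ => by norm_num) 1 (by rw [hn0]; norm_num)
    have v2 : valPQ 3 2 (w ++ [2]) = 1 := by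
      rw [valPQ_append, hn0]; norm_num [valPQ]
    have m21 : w ++ [2,1] ∈ Lpq 3 2 := by
      have : (w ++ [2]) ++ [1] ∈ Lpq 3 2 :=
        mem_snoc (w ++ [2]) m2 1 (fun h => absurd h (by simp)) 2
          (by rw [v2]; norm_num)
      simpa using this
    refine key w u [] [2] [2,1] (by norm_num) (by norm_num) (by norm_num)
      hwnil m2 m21 (by decide) (by decide) (by decide)
      (729/64 - 567/64 * t + 27/16 * t^2) (9*t - 3*t^2) (-(9/4)*t + t^2) ?_
    intro x
    rw [hu, ← ht]
    norm_num [valPQ]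
    ring
  · rcases Nat.even_or_odd n with ⟨j, hj⟩ | ⟨j, hj⟩
    · -- n = j + j even
      have hq : valPQ 3 2 w = 2*(j:ℚ) := by
        rw [hn, hj]; push_cast; ring
      have m0 : w ++ [0] ∈ Lpq 3 2 :=
        mem_snoc w hw 0 (fun h => absurd h hwe) (3*j)
          (by rw [hq]; push_cast; norm_num; ring)
      have v0 : valPQ 3 2 (w ++ [0]) = 3*(j:ℚ) := by
        rw [valPQ_append, hq]; norm_num [valPQ]; ring
      have m2 : w ++ [2] ∈ Lpq 3 2 :=
        mem_snoc w hw 2 (fun h => absurd h hwe) (3*j+1)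
          (by rw [hq]; push_cast; norm_num; ring)
      have v2 : valPQ 3 2 (w ++ [2]) = 3*(j:ℚ)+1 := by
        rw [valPQ_append, hq]; norm_num [valPQ]; ring
      rcases Nat.even_or_odd j with ⟨i, hi⟩ | ⟨i, hi⟩
      · -- n ≡ 0 mod 4: use ε, [0,2], [2,1]
        have hji : (j:ℚ) = 2*(i:ℚ) := by rw [hi]; push_cast; ring
        have m02 : w ++ [0,2] ∈ Lpq 3 2 := by
          have : (w ++ [0]) ++ [2] ∈ Lpq 3 2 :=
            mem_snoc (w ++ [0]) m0 2 (fun h => absurd h (by simp)) (9*i+1)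
              (by rw [v0, hji]; push_cast; norm_num; ring)
          simpa using this
        have m21 : w ++ [2,1] ∈ Lpq 3 2 := by
          have : (w ++ [2]) ++ [1] ∈ Lpq 3 2 :=
            mem_snoc (w ++ [2]) m2 1 (fun h => absurd h (by simp)) (9*i+2)
              (by rw [v2, hji]; push_cast; norm_num; ring)
          simpa using this
        refine key w u [] [0,2] [2,1] (by norm_num) (by norm_num) (by norm_num)
          hwnil m02 m21 (by decide) (by decide) (by decide)
          (729/64 - 729/64 * t + 81/32 * t^2) (3*t - t^2) (-(3/4)*t + t^2/2) ?_
        intro x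
        rw [hu, ← ht]
        norm_num [valPQ]
        ring
      · -- n ≡ 2 mod 4: use ε, [0,1], [2,0]
        have hji : (j:ℚ) = 2*(i:ℚ)+1 := by rw [hi]; push_cast; ring
        have m01 : w ++ [0,1] ∈ Lpq 3 2 := by
          have : (w ++ [0]) ++ [1] ∈ Lpq 3 2 :=
            mem_snoc (w ++ [0]) m0 1 (fun h => absurd h (by simp)) (9*i+5)
              (by rw [v0, hji]; push_cast; norm_num; ring)
          simpa using this
        have m20 : w ++ [2,0] ∈ Lpq 3 2 := by
          have : (w ++ [2]) ++ [0] ∈ Lpq 3 2 :=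
            mem_snoc (w ++ [2]) m2 0 (fun h => absurd h (by simp)) (9*i+6)
              (by rw [v2, hji]; push_cast; norm_num; ring)
          simpa using this
        refine key w u [] [0,1] [2,0] (by norm_num) (by norm_num) (by norm_num)
          hwnil m01 m20 (by decide) (by decide) (by decide)
          (729/64 - 81/4 * t + 27/4 * t^2) (9/2*t - 2*t^2) (-(1/2)*t + 2/3*t^2) ?_
        intro x
        rw [hu, ← ht]
        norm_num [valPQ]
        ring
    · -- n = 2j+1 odd
      have hq : valPQ 3 2 w = 2*(j:ℚ)+1 := by
        rw [hn, hj]; push_cast; ring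
      have m1 : w ++ [1] ∈ Lpq 3 2 :=
        mem_snoc w hw 1 (fun h => absurd h hwe) (3*j+2)
          (by rw [hq]; push_cast; norm_num; ring)
      have v1 : valPQ 3 2 (w ++ [1]) = 3*(j:ℚ)+2 := by
        rw [valPQ_append, hq]; norm_num [valPQ]; ring
      rcases Nat.even_or_odd j with ⟨i, hi⟩ | ⟨i, hi⟩
      · -- n ≡ 1 mod 4: use ε, [1,0], [1,2]
        have hji : (j:ℚ) = 2*(i:ℚ) := by rw [hi]; push_cast; ring
        have m10 : w ++ [1,0] ∈ Lpq 3 2 := by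
          have : (w ++ [1]) ++ [0] ∈ Lpq 3 2 :=
            mem_snoc (w ++ [1]) m1 0 (fun h => absurd h (by simp)) (9*i+3)
              (by rw [v1, hji]; push_cast; norm_num; ring)
          simpa using this
        have m12 : w ++ [1,2] ∈ Lpq 3 2 := by
          have : (w ++ [1]) ++ [2] ∈ Lpq 3 2 :=
            mem_snoc (w ++ [1]) m1 2 (fun h => absurd h (by simp)) (9*i+4)
              (by rw [v1, hji]; push_cast; norm_num; ring)
          simpa using this
        refine key w u [] [1,0] [1,2] (by norm_num) (by norm_num) (by norm_num)
          hwnil m10 m12 (by decide) (by decide) (by decide)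
          (729/64 - 405/28 * t + 27/7 * t^2) (7/2*t - 4/3*t^2) (-(9/14)*t + 4/7*t^2) ?_
        intro x
        rw [hu, ← ht]
        norm_num [valPQ]
        ring
      · -- n ≡ 3 mod 4: use ε, [1], [1,1]
        have hji : (j:ℚ) = 2*(i:ℚ)+1 := by rw [hi]; push_cast; ring
        have m11 : w ++ [1,1] ∈ Lpq 3 2 := by
          have : (w ++ [1]) ++ [1] ∈ Lpq 3 2 :=
            mem_snoc (w ++ [1]) m1 1 (fun h => absurd h (by simp)) (9*i+8)
              (by rw [v1, hji]; push_cast; norm_num; ring)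
          simpa using this
        refine key w u [] [1] [1,1] (by norm_num) (by norm_num) (by norm_num)
          hwnil m1 m11 (by decide) (by decide) (by decide)
          (729/64 - 81/5 * t + 27/5 * t^2) (45/4*t - 6*t^2) (-(9/5)*t + 8/5*t^2) ?_
        intro x
        rw [hu, ← ht]
        norm_num [valPQ]
        ring

noncomputable def coeff (D : Set (List (Fin 3))) (u : List (Fin 3)) : List (Fin 3) → ℚ :=
  if h : ∃ g, Pprop D u g then h.choose else 0

theorem statement8 :
    ∃ h : ℕ, 1 ≤ h ∧ IsLinear ℚ (Lpq 3 2) (fun w => (valPQ 3 2 w) ^ 2) h := by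
  refine ⟨3, by norm_num, fun D u v => coeff D u v, ?_⟩
  intro w hw u hu hwu
  have hex : ∃ g, Pprop (Dset (Lpq 3 2) 3 w) u g := main w hw u hu
  have hc : coeff (Dset (Lpq 3 2) 3 w) u = hex.choose := by
    rw [coeff, dif_pos hex]
  simp only [hc]
  exact hex.choose_spec w hw rfl hwu
end

section
/- Let p > q > 1 be coprime integers, R a commutative ring, M an R-module, and x : ℕ → M a sequence whose range { x(n) : n ∈ ℕ } is finite. If x is (R,p/q)-regular, then x is p/q-automatic. -/
open scoped Classical

/-- A sequence `x` is `p/q`-automatic: there is a DFAO (finite state set `Q`, initial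
state `q0`, transition `δ`, output `μ`) computing `x(val_{p/q}(w))` for `w ∈ L_{p/q}`,
reading most significant digit first. -/
def PQAutomatic {B : Type*} (p q : ℕ) (x : ℕ → B) : Prop :=
  ∃ (Q : Type) (_ : Fintype Q) (q0 : Q) (δ : Q → Fin p → Q) (μ : Q → B),
    ∀ w ∈ Lpq p q, x (valPQ p q w).num.toNat = μ (w.foldl δ q0)

namespace St11

/-- natural value of a word -/
def nval (p q : ℕ) (w : List (Fin p)) : ℕ := (valPQ p q w).num.toNat

lemma valPQ_snoc (p q : ℕ) (w : List (Fin p)) (a : Fin p) :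
    valPQ p q (w ++ [a]) = ((p:ℚ) * valPQ p q w + (a.val:ℚ)) / q := by
  simp [valPQ, List.foldl_append]

lemma nil_mem (p q : ℕ) : ([] : List (Fin p)) ∈ Lpq p q := by
  refine ⟨by simp, fun u hu => ?_⟩
  rw [List.prefix_nil] at hu
  exact ⟨0, by simp [hu, valPQ]⟩

lemma mem_of_prefix {p q : ℕ} {u w : List (Fin p)} (hu : u <+: w) (hw : w ∈ Lpq p q) :
    u ∈ Lpq p q := by
  obtain ⟨t, rfl⟩ := hu
  refine ⟨fun a ha => hw.1 a ?_, fun u' hu' => hw.2 u' (hu'.trans (List.prefix_append _ _))⟩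
  rw [List.head?_append, ha]; rfl

lemma val_eq_nval {p q : ℕ} {w : List (Fin p)} (hw : w ∈ Lpq p q) :
    valPQ p q w = (nval p q w : ℚ) := by
  obtain ⟨n, hn⟩ := hw.2 w List.prefix_rfl
  rw [hn]; simp [nval, hn]

lemma nval_eq {p q : ℕ} {w : List (Fin p)} {n : ℕ} (hn : valPQ p q w = (n : ℚ)) :
    nval p q w = n := by simp [nval, hn]

lemma nval_nil (p q : ℕ) : nval p q ([] : List (Fin p)) = 0 := by
  simp [nval, valPQ]

/-- The key arithmetic recurrence. -/
lemma snoc_val_eq {p q : ℕ} (hq : 0 < q) {w : List (Fin p)} {a : Fin p}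
    (h' : w ++ [a] ∈ Lpq p q) :
    q * nval p q (w ++ [a]) = p * nval p q w + a.val := by
  have hw : w ∈ Lpq p q := mem_of_prefix (List.prefix_append _ _) h'
  have h1 : valPQ p q w = (nval p q w : ℚ) := val_eq_nval hw
  have h2 : valPQ p q (w ++ [a]) = (nval p q (w ++ [a]) : ℚ) := val_eq_nval h'
  have h3 := valPQ_snoc p q w a
  rw [h1, h2] at h3
  have hq' : (q : ℚ) ≠ 0 := by positivity
  field_simp at h3
  have : ((q * nval p q (w ++ [a]) : ℕ) : ℚ) = ((p * nval p q w + a.val : ℕ) : ℚ) := by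
    push_cast; linarith
  exact_mod_cast this

lemma head_ne_zero {p q : ℕ} {a : Fin p} {t : List (Fin p)} (h : (a :: t) ∈ Lpq p q) :
    a.val ≠ 0 := h.1 a rfl

/-- Introduction rule for snoc membership. -/
lemma snoc_mem {p q : ℕ} (hq : 0 < q) {w : List (Fin p)} {a : Fin p} (hw : w ∈ Lpq p q)
    (hhead : w = [] → a.val ≠ 0) (hdvd : q ∣ p * nval p q w + a.val) :
    w ++ [a] ∈ Lpq p q := by
  constructor
  · intro b hb
    cases w with
    | nil => simp at hb; subst hb; exact hhead rfl
    | cons c w' =>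
      simp only [List.cons_append, List.head?_cons, Option.some.injEq] at hb
      subst hb; exact hw.1 c rfl
  · intro u hu
    rcases List.prefix_concat_iff.mp hu with h | h
    · subst h
      obtain ⟨m, hm⟩ := hdvd
      refine ⟨m, ?_⟩
      rw [valPQ_snoc, val_eq_nval hw]
      have hq' : (q : ℚ) ≠ 0 := by positivity
      rw [div_eq_iff hq']
      have : ((p * nval p q w + a.val : ℕ) : ℚ) = ((q * m : ℕ) : ℚ) := by rw [← hm]
      push_cast at this ⊢
      linarith
    · exact hw.2 u h

lemma snoc_mem_iff {p q : ℕ} (hq : 0 < q) {w : List (Fin p)} {a : Fin p}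
    (hw : w ∈ Lpq p q) :
    w ++ [a] ∈ Lpq p q ↔ ((w = [] → a.val ≠ 0) ∧ q ∣ p * nval p q w + a.val) := by
  constructor
  · intro h'
    refine ⟨fun hnil => ?_, ⟨nval p q (w ++ [a]), (snoc_val_eq hq h').symm⟩⟩
    subst hnil
    exact head_ne_zero (by simpa using h')
  · rintro ⟨h1, h2⟩; exact snoc_mem hq hw h1 h2

lemma pos_of_ne_nil {p q : ℕ} (hq : 1 < q) (hpq : q < p) {w : List (Fin p)}
    (hw : w ∈ Lpq p q) (hne : w ≠ []) : 1 ≤ nval p q w := by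
  induction w using List.reverseRecOn with
  | nil => exact absurd rfl hne
  | append_singleton u a ih =>
    have hu : u ∈ Lpq p q := mem_of_prefix (List.prefix_append _ _) hw
    have heq : q * nval p q (u ++ [a]) = p * nval p q u + a.val :=
      snoc_val_eq (by omega) hw
    rcases eq_or_ne u [] with rfl | hune
    · have ha : a.val ≠ 0 := head_ne_zero (by simpa using hw)
      rw [nval_nil, Nat.mul_zero, Nat.zero_add] at heq
      rcases Nat.eq_zero_or_pos (nval p q ([] ++ [a])) with h0 | h1
      · rw [h0, Nat.mul_zero] at heq; omega
      · exact h1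
    · have := ih hu hune
      nlinarith

/-- Membership of extensions and residues only depend on the value modulo powers of `q`. -/
lemma residue {p q : ℕ} (hq : 1 < q) (hpq : q < p) {w w' : List (Fin p)}
    (hw : w ∈ Lpq p q) (hw' : w' ∈ Lpq p q) (hwne : w ≠ []) (hw'ne : w' ≠ []) :
    ∀ (v : List (Fin p)) (k : ℕ), v.length ≤ k →
      Nat.ModEq (q ^ k) (nval p q w) (nval p q w') →
      ((w ++ v ∈ Lpq p q ↔ w' ++ v ∈ Lpq p q) ∧
        (w ++ v ∈ Lpq p q → w' ++ v ∈ Lpq p q →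
          Nat.ModEq (q ^ (k - v.length)) (nval p q (w ++ v)) (nval p q (w' ++ v)))) := by
  intro v
  induction v using List.reverseRecOn with
  | nil =>
    intro k _ hmod
    simp only [List.append_nil]
    exact ⟨⟨fun _ => hw', fun _ => hw⟩, fun _ _ => by simpa using hmod⟩
  | append_singleton v a ih =>
    intro k hk hmod
    have hlen : v.length ≤ k := by simp at hk; omega
    obtain ⟨hiff, hres⟩ := ih k hlen hmod
    have hm1 : 1 ≤ k - v.length := by simp at hk; omega
    rw [show w ++ (v ++ [a]) = (w ++ v) ++ [a] by simp,
        show w' ++ (v ++ [a]) = (w' ++ v) ++ [a] by simp]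
    by_cases hmem : w ++ v ∈ Lpq p q
    · have hmem' : w' ++ v ∈ Lpq p q := hiff.mp hmem
      have hne1 : w ++ v ≠ [] := by simp [hwne]
      have hne2 : w' ++ v ≠ [] := by simp [hw'ne]
      have hres' := hres hmem hmem'
      have hq0 : 0 < q := by omega
      have hdvd : q ∣ q ^ (k - v.length) := dvd_pow_self q (by omega)
      have hmodq : Nat.ModEq q (nval p q (w ++ v)) (nval p q (w' ++ v)) :=
        hres'.of_dvd hdvd
      have hiffa : (w ++ v) ++ [a] ∈ Lpq p q ↔ (w' ++ v) ++ [a] ∈ Lpq p q := by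
        rw [snoc_mem_iff hq0 hmem, snoc_mem_iff hq0 hmem']
        have : (q ∣ p * nval p q (w ++ v) + a.val) ↔
            (q ∣ p * nval p q (w' ++ v) + a.val) := by
          constructor
          · intro hd
            have : Nat.ModEq q (p * nval p q (w ++ v) + a.val)
                (p * nval p q (w' ++ v) + a.val) := (hmodq.mul_left p).add_right _
            exact (Nat.modEq_zero_iff_dvd).mp (((Nat.modEq_zero_iff_dvd).mpr hd).symm.trans
              this).symm
          · intro hd
            have : Nat.ModEq q (p * nval p q (w' ++ v) + a.val)
                (p * nval p q (w ++ v) + a.val) := (hmodq.symm.mul_left p).add_right _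
            exact (Nat.modEq_zero_iff_dvd).mp (((Nat.modEq_zero_iff_dvd).mpr hd).symm.trans
              this).symm
        simp [hne1, hne2, this]
      refine ⟨hiffa, fun h1 h2 => ?_⟩
      have e1 : q * nval p q ((w ++ v) ++ [a]) = p * nval p q (w ++ v) + a.val :=
        snoc_val_eq hq0 h1
      have e2 : q * nval p q ((w' ++ v) ++ [a]) = p * nval p q (w' ++ v) + a.val :=
        snoc_val_eq hq0 h2
      have hmm : Nat.ModEq (q ^ (k - v.length)) (q * nval p q ((w ++ v) ++ [a]))
          (q * nval p q ((w' ++ v) ++ [a])) := by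
        rw [e1, e2]; exact (hres'.mul_left p).add_right _
      have hpow : q ^ (k - v.length) = q * q ^ (k - (v ++ [a]).length) := by
        have : k - v.length = (k - (v ++ [a]).length) + 1 := by simp; omega
        rw [this, pow_succ]; ring
      rw [hpow] at hmm
      exact Nat.ModEq.mul_left_cancel' (by omega) hmm
    · have hmem' : w' ++ v ∉ Lpq p q := fun h => hmem (hiff.mpr h)
      constructor
      · constructor
        · intro h; exact absurd (mem_of_prefix (by simp) h) hmem
        · intro h; exact absurd (mem_of_prefix (by simp) h) hmem'
      · intro h _; exact absurd (mem_of_prefix (by simp) h) hmem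

lemma Dset_eq_of_residue {p q h : ℕ} (hq : 1 < q) (hpq : q < p) {w w' : List (Fin p)}
    (hw : w ∈ Lpq p q) (hw' : w' ∈ Lpq p q) (hwne : w ≠ []) (hw'ne : w' ≠ [])
    (hmod : Nat.ModEq (q ^ h) (nval p q w) (nval p q w')) :
    Dset (Lpq p q) h w = Dset (Lpq p q) h w' := by
  ext v
  simp only [Dset, Set.mem_setOf_eq]
  constructor
  · rintro ⟨hl, hm⟩
    exact ⟨hl, ((residue hq hpq hw hw' hwne hw'ne v h hl hmod).1).mp hm⟩
  · rintro ⟨hl, hm⟩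
    exact ⟨hl, ((residue hq hpq hw hw' hwne hw'ne v h hl hmod).1).mpr hm⟩

/-! ### The hypothesis-tracking automaton -/

section Automaton

variable (p q h : ℕ) {M : Type*} [AddCommMonoid M] (x : ℕ → M)

/-- Short words: the index type for windows of decorations. -/
noncomputable instance fintypeShort : Fintype {v : List (Fin p) // v.length < h} :=
  (List.finite_length_lt (Fin p) h).fintype

/-- A window of (optional) decoration values. -/
def Vec : Type _ := {v : List (Fin p) // v.length < h} → Option (Set.range x)

/-- Clip a module element into the range of `x`. -/
noncomputable def clip (m : M) : Set.range x :=
  if hm : m ∈ Set.range x then ⟨m, hm⟩ else ⟨x 0, ⟨0, rfl⟩⟩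

lemma clip_x (n : ℕ) : (clip x (x n) : M) = x n := by
  rw [clip, dif_pos ⟨n, rfl⟩]

/-- Extract a module element from an optional clipped value. -/
def optVal (o : Option (Set.range x)) : M := (o.map Subtype.val).getD 0

/-- The true window of decorations at a node `w`. -/
noncomputable def trueVec (w : List (Fin p)) : Vec p h x := fun v =>
  if w ++ v.1 ∈ Lpq p q then some (clip x (x (nval p q (w ++ v.1)))) else none

/-- The backwards residue map: the residue of the parent of a node with residue `r`
reached by letter `a`. -/
noncomputable def bres (r : ZMod (q ^ h)) (a : Fin p) : ZMod (q ^ h) :=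
  (p : ZMod (q ^ h))⁻¹ * ((q : ZMod (q ^ h)) * r - (a.val : ZMod (q ^ h)))

/-- `r` agrees with `n` to depth `j`. -/
def Agree (r : ZMod (q ^ h)) (j n : ℕ) : Prop :=
  ∃ s : ZMod (q ^ h), r = (n : ZMod (q ^ h)) + (q : ZMod (q ^ h)) ^ j * s

lemma agree_zero (r : ZMod (q ^ h)) (n : ℕ) : Agree q h r 0 n := by
  exact ⟨r - n, by ring⟩

lemma agree_of_eq {r : ZMod (q ^ h)} {n : ℕ} (he : r = (n : ZMod (q ^ h))) (j : ℕ) :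
    Agree q h r j n := ⟨0, by rw [he]; ring⟩

lemma qpow_h : ((q : ZMod (q ^ h)) ^ h : ZMod (q ^ h)) = 0 := by
  have : (((q ^ h : ℕ)) : ZMod (q ^ h)) = 0 := ZMod.natCast_self _
  push_cast at this
  exact this

lemma eq_of_agree_ge {r : ZMod (q ^ h)} {n j : ℕ} (hj : h ≤ j)
    (ha : Agree q h r j n) : r = (n : ZMod (q ^ h)) := by
  obtain ⟨s, hs⟩ := ha
  have : ((q : ZMod (q ^ h)) ^ j : ZMod (q ^ h)) = 0 := by
    have : j = h + (j - h) := by omega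
    rw [this, pow_add, qpow_h, zero_mul]
  rw [hs, this, zero_mul, add_zero]

/-- Key property of `bres`: hypotheses that agree to depth `j` with the value of a node
pull back to hypotheses agreeing to depth `j+1` with the value of the parent. -/
lemma bres_agree {n n' : ℕ} {a : Fin p} (hco : Nat.Coprime p (q ^ h))
    (hrec : q * n' = p * n + a.val) {r : ZMod (q ^ h)} {j : ℕ}
    (ha : Agree q h r j n') : Agree q h (bres p q h r a) (j + 1) n := by
  obtain ⟨s, hs⟩ := ha
  refine ⟨(p : ZMod (q ^ h))⁻¹ * s, ?_⟩
  have hinv : (p : ZMod (q ^ h)) * (p : ZMod (q ^ h))⁻¹ = 1 :=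
    ZMod.coe_mul_inv_eq_one p hco
  have hqn : (q : ZMod (q ^ h)) * (n' : ZMod (q ^ h)) =
      (p : ZMod (q ^ h)) * (n : ZMod (q ^ h)) + (a.val : ZMod (q ^ h)) := by
    have := congrArg (fun m : ℕ => (m : ZMod (q ^ h))) hrec
    push_cast at this
    exact this
  rw [bres, hs]
  calc (p : ZMod (q ^ h))⁻¹ * ((q : ZMod (q ^ h)) * ((n' : ZMod (q ^ h)) +
        (q : ZMod (q ^ h)) ^ j * s) - (a.val : ZMod (q ^ h)))
      = (p : ZMod (q ^ h))⁻¹ * ((p : ZMod (q ^ h)) * (n : ZMod (q ^ h))) +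
        (p : ZMod (q ^ h))⁻¹ * ((q : ZMod (q ^ h)) ^ (j + 1) * s) := by
        rw [mul_add, hqn]; ring
    _ = (n : ZMod (q ^ h)) + (q : ZMod (q ^ h)) ^ (j + 1) *
        ((p : ZMod (q ^ h))⁻¹ * s) := by
        rw [← mul_assoc, mul_comm (p : ZMod (q ^ h))⁻¹, hinv, one_mul]; ring

end Automaton

section Automaton2

variable (p q h : ℕ) {M : Type*} [AddCommMonoid M] (x : ℕ → M)
variable (R : Type*) [CommRing R] [Module R M]
variable (c : Set (List (Fin p)) → List (Fin p) → List (Fin p) → R)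

/-- The follow-set predicted from a residue (chosen among actual nonempty nodes). -/
noncomputable def Dhat (r : ZMod (q ^ h)) : Set (List (Fin p)) :=
  if hex : ∃ w, w ∈ Lpq p q ∧ w ≠ [] ∧ ((nval p q w : ZMod (q ^ h))) = r then
    Dset (Lpq p q) h hex.choose
  else ∅

lemma Dhat_eq {p q h : ℕ} (hq : 1 < q) (hpq : q < p) {w : List (Fin p)}
    (hw : w ∈ Lpq p q) (hwne : w ≠ []) :
    Dhat p q h ((nval p q w : ZMod (q ^ h))) = Dset (Lpq p q) h w := by
  have hex : ∃ w', w' ∈ Lpq p q ∧ w' ≠ [] ∧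
      ((nval p q w' : ZMod (q ^ h))) = ((nval p q w : ZMod (q ^ h))) := ⟨w, hw, hwne, rfl⟩
  rw [Dhat, dif_pos hex]
  obtain ⟨hw', hw'ne, hr⟩ := hex.choose_spec
  exact Dset_eq_of_residue hq hpq hw' hw hw'ne hwne
    ((ZMod.natCast_eq_natCast_iff _ _ _).mp hr)

/-- Update a window along the letter `a`, using `D` as the (hypothesized) follow-set of
the parent. -/
noncomputable def newVec (D : Set (List (Fin p))) (a : Fin p) (V : Vec p h x) :
    Vec p h x := fun v =>
  if hlen : v.1.length + 1 < h then V ⟨a :: v.1, hlen⟩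
  else if (a :: v.1) ∈ D then
    some (clip x (∑ v' ∈ Finset.univ.filter
        (fun v' : {v : List (Fin p) // v.length < h} => (V v').isSome),
      c D (a :: v.1) v'.1 • optVal x (V v')))
  else none

/-- The state space of the automaton. -/
def StQ : Type _ := Bool × (ZMod (q ^ h) → Option (Vec p h x))

/-- The transition function. -/
noncomputable def delta (s : StQ p q h x) (a : Fin p) : StQ p q h x :=
  (false, fun r' =>
    (s.2 (bres p q h r' a)).map (fun V =>
      newVec p h x R c
        (if s.1 then Dset (Lpq p q) h [] else Dhat p q h (bres p q h r' a)) a V))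

/-- The initial state. -/
noncomputable def initQ : StQ p q h x :=
  (true, fun r => if r = 0 then some (trueVec p q h x []) else none)

/-- The output function. -/
noncomputable def outQ (hh : 0 < h) (s : StQ p q h x) : M :=
  if hex : ∃ r, (s.2 r).isSome then
    optVal x (((s.2 hex.choose).get hex.choose_spec) ⟨[], by simpa using hh⟩)
  else 0

/-- The invariant carried along words of the language. -/
def INV (w : List (Fin p)) (s : StQ p q h x) : Prop :=
  (s.1 = true ↔ w = []) ∧
  (s.2 ((nval p q w : ZMod (q ^ h)))).isSome ∧
  ∀ r V, s.2 r = some V → ∀ j, Agree q h r j (nval p q w) →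
    ∀ v : {v : List (Fin p) // v.length < h}, v.1.length ≤ j →
      V v = trueVec p q h x w v

end Automaton2

section Main

variable {p q h : ℕ} {M : Type*} [AddCommMonoid M] {x : ℕ → M}
variable {R : Type*} [CommRing R] [Module R M]
variable {c : Set (List (Fin p)) → List (Fin p) → List (Fin p) → R}

lemma trueVec_cons (w : List (Fin p)) (a : Fin p) (v : List (Fin p))
    (hlen : (a :: v).length < h) (hlen' : v.length < h) :
    trueVec p q h x w ⟨a :: v, hlen⟩ = trueVec p q h x (w ++ [a]) ⟨v, hlen'⟩ := by
  have he : w ++ a :: v = (w ++ [a]) ++ v := by simp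
  simp only [trueVec, he]

lemma inv_step (hq : 1 < q) (hpq : q < p) (hco : Nat.Coprime p q) (hh : 1 ≤ h)
    (hc : ∀ w ∈ Lpq p q, ∀ u : List (Fin p), u.length = h → w ++ u ∈ Lpq p q →
      decSeq p q x (w ++ u) =
        ∑ᶠ v ∈ {v : List (Fin p) | v.length < h ∧ w ++ v ∈ Lpq p q},
          c (Dset (Lpq p q) h w) u v • decSeq p q x (w ++ v))
    {w : List (Fin p)} {a : Fin p} (hwa : w ++ [a] ∈ Lpq p q)
    {s : StQ p q h x} (hs : INV p q h x w s) :
    INV p q h x (w ++ [a]) (delta p q h x R c s a) := by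
  have hq0 : 0 < q := by omega
  have hw : w ∈ Lpq p q := mem_of_prefix (List.prefix_append _ _) hwa
  have hco' : Nat.Coprime p (q ^ h) := hco.pow_right h
  have hrec : q * nval p q (w ++ [a]) = p * nval p q w + a.val := snoc_val_eq hq0 hwa
  have hbres_true : bres p q h ((nval p q (w ++ [a]) : ZMod (q ^ h))) a =
      ((nval p q w : ZMod (q ^ h))) := by
    have h1 : Agree q h ((nval p q (w ++ [a]) : ZMod (q ^ h))) h (nval p q (w ++ [a])) :=
      agree_of_eq q h rfl h
    exact eq_of_agree_ge q h (by omega) (bres_agree p q h hco' hrec h1)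
  refine ⟨?_, ?_, ?_⟩
  · simp only [delta]
    simp
  · -- aliveness at the true residue
    simp only [delta, hbres_true]
    obtain ⟨V, hV⟩ := Option.isSome_iff_exists.mp hs.2.1
    rw [hV]
    rfl
  · -- the claims
    intro r' V' hV' j hagree v hvj
    simp only [delta] at hV'
    rw [Option.map_eq_some_iff] at hV'
    obtain ⟨V, hV, rfl⟩ := hV'
    have hpar : Agree q h (bres p q h r' a) (j + 1) (nval p q w) :=
      bres_agree p q h hco' hrec hagree
    have hclaims := hs.2.2 (bres p q h r' a) V hV (j + 1) hpar
    by_cases hlen : v.1.length + 1 < h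
    · -- copy case
      have : newVec p h x R c
          (if s.1 then Dset (Lpq p q) h [] else Dhat p q h (bres p q h r' a)) a V v =
          V ⟨a :: v.1, hlen⟩ := by
        simp only [newVec, dif_pos hlen]
      rw [this, hclaims ⟨a :: v.1, hlen⟩ (by simpa using hvj)]
      exact trueVec_cons w a v.1 hlen v.2
    · -- creation case
      have hvlen : v.1.length = h - 1 := by have := v.2; omega
      have hjh : h ≤ j + 1 := by omega
      have hbres_eq : bres p q h r' a = ((nval p q w : ZMod (q ^ h))) :=
        eq_of_agree_ge q h hjh hpar
      have hVt : ∀ v'' : {v : List (Fin p) // v.length < h},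
          V v'' = trueVec p q h x w v'' := by
        intro v''
        exact hclaims v'' (by have := v''.2; omega)
      have hD : (if s.1 then Dset (Lpq p q) h [] else Dhat p q h (bres p q h r' a)) =
          Dset (Lpq p q) h w := by
        by_cases hb : s.1
        · have hwnil : w = [] := (hs.1).mp (by simpa using hb)
          rw [if_pos hb, hwnil]
        · have hwne : w ≠ [] := fun hnil => by
            have := (hs.1).mpr hnil; simp [hb] at this
          rw [if_neg hb, hbres_eq, Dhat_eq hq hpq hw hwne]
      rw [hD]
      have hlena : (a :: v.1).length = h := by simp [hvlen]; omega
      have happ : w ++ (a :: v.1) = (w ++ [a]) ++ v.1 := List.append_cons _ _ _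
      have hmem_iff : (a :: v.1) ∈ Dset (Lpq p q) h w ↔ (w ++ [a]) ++ v.1 ∈ Lpq p q := by
        simp only [Dset, Set.mem_setOf_eq, happ, hlena]
        exact ⟨fun h' => h'.2, fun h' => ⟨le_refl _, h'⟩⟩
      by_cases hmem : (w ++ [a]) ++ v.1 ∈ Lpq p q
      · have hsum : (∑ v' ∈ Finset.univ.filter
            (fun v' : {v : List (Fin p) // v.length < h} => (V v').isSome),
            c (Dset (Lpq p q) h w) (a :: v.1) v'.1 • optVal x (V v')) =
            x (nval p q ((w ++ [a]) ++ v.1)) := by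
          have hlin := hc w hw (a :: v.1) hlena (by rw [happ]; exact hmem)
          have hfilter : (Finset.univ.filter
              (fun v' : {v : List (Fin p) // v.length < h} => (V v').isSome)) =
              (Finset.univ.filter
              (fun v' : {v : List (Fin p) // v.length < h} => w ++ v'.1 ∈ Lpq p q)) := by
            apply Finset.filter_congr
            intro v' _
            rw [hVt v']
            simp only [trueVec]
            by_cases hm : w ++ v'.1 ∈ Lpq p q <;> simp [hm]
          have hseteq : {v' : List (Fin p) | v'.length < h ∧ w ++ v' ∈ Lpq p q} =
              ↑((Finset.univ.filter
                (fun v' : {v : List (Fin p) // v.length < h} => w ++ v'.1 ∈ Lpq p q)).image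
                  Subtype.val) := by
            ext u
            simp only [Set.mem_setOf_eq, Finset.coe_image, Set.mem_image, Finset.mem_coe,
              Finset.mem_filter, Finset.mem_univ, true_and]
            constructor
            · rintro ⟨h1, h2⟩; exact ⟨⟨u, h1⟩, h2, rfl⟩
            · rintro ⟨⟨u', hu'⟩, h2, rfl⟩; exact ⟨hu', h2⟩
          rw [hseteq, finsum_mem_coe_finset, Finset.sum_image
            (fun _ _ _ _ hv => Subtype.ext hv)] at hlin
          rw [hfilter]
          have hsummand : ∀ v' ∈ (Finset.univ.filter
              (fun v' : {v : List (Fin p) // v.length < h} => w ++ v'.1 ∈ Lpq p q)),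
              c (Dset (Lpq p q) h w) (a :: v.1) v'.1 • optVal x (V v') =
              c (Dset (Lpq p q) h w) (a :: v.1) v'.1 • decSeq p q x (w ++ v'.1) := by
            intro v' hv'
            rw [Finset.mem_filter] at hv'
            rw [hVt v']
            simp only [trueVec, if_pos hv'.2]
            congr 1
            simp only [optVal, Option.map_some, Option.getD_some]
            rw [clip_x]
            rfl
          rw [Finset.sum_congr rfl hsummand]
          have : decSeq p q x (w ++ (a :: v.1)) = x (nval p q ((w ++ [a]) ++ v.1)) := by
            rw [happ]; rfl
          rw [← this, hlin]
        have : newVec p h x R c (Dset (Lpq p q) h w) a V v =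
            some (clip x (x (nval p q ((w ++ [a]) ++ v.1)))) := by
          simp only [newVec, dif_neg hlen, if_pos (hmem_iff.mpr hmem), hsum]
        rw [this]
        simp only [trueVec, if_pos hmem]
      · have : newVec p h x R c (Dset (Lpq p q) h w) a V v = none := by
          simp only [newVec, dif_neg hlen, if_neg (fun h' => hmem (hmem_iff.mp h'))]
        rw [this]
        simp only [trueVec, if_neg hmem]

end Main

section Final

variable {p q h : ℕ} {M : Type*} [AddCommMonoid M] {x : ℕ → M}
variable {R : Type*} [CommRing R] [Module R M]
variable {c : Set (List (Fin p)) → List (Fin p) → List (Fin p) → R}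

lemma inv_init : INV p q h x [] (initQ p q h x) := by
  refine ⟨by simp [initQ], ?_, ?_⟩
  · rw [nval_nil]
    simp [initQ]
  · intro r V hV j _ v _
    simp only [initQ] at hV
    by_cases hr : r = 0
    · rw [if_pos hr] at hV
      cases hV
      rfl
    · rw [if_neg hr] at hV
      cases hV

lemma inv_all (hq : 1 < q) (hpq : q < p) (hco : Nat.Coprime p q) (hh : 1 ≤ h)
    (hc : ∀ w ∈ Lpq p q, ∀ u : List (Fin p), u.length = h → w ++ u ∈ Lpq p q →
      decSeq p q x (w ++ u) =
        ∑ᶠ v ∈ {v : List (Fin p) | v.length < h ∧ w ++ v ∈ Lpq p q},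
          c (Dset (Lpq p q) h w) u v • decSeq p q x (w ++ v))
    {w : List (Fin p)} (hw : w ∈ Lpq p q) :
    INV p q h x w (List.foldl (delta p q h x R c) (initQ p q h x) w) := by
  induction w using List.reverseRecOn with
  | nil => exact inv_init
  | append_singleton u a ih =>
    have hu : u ∈ Lpq p q := mem_of_prefix (List.prefix_append _ _) hw
    have := inv_step hq hpq hco hh hc hw (ih hu)
    simpa [List.foldl_append] using this

end Final

end St11


theorem statement11 (p q : ℕ) (hq : 1 < q) (hpq : q < p) (hco : Nat.Coprime p q)
    (R : Type*) [CommRing R] (M : Type*) [AddCommMonoid M] [Module R M]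
    (x : ℕ → M) (hfin : (Set.range x).Finite)
    (hreg : PQRegular R p q x) :
    PQAutomatic p q x := by
  obtain ⟨h, hh, c, hc⟩ := hreg
  haveI : NeZero (q ^ h) := ⟨pow_ne_zero _ (by omega)⟩
  haveI : Fintype ↥(Set.range x) := hfin.fintype
  haveI : Finite (St11.Vec p h x) := by unfold St11.Vec; infer_instance
  haveI : Fintype (St11.Vec p h x) := Fintype.ofFinite _
  haveI : Finite (St11.StQ p q h x) := by unfold St11.StQ; infer_instance
  obtain ⟨n, ⟨e⟩⟩ := Finite.exists_equiv_fin (St11.StQ p q h x)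
  refine ⟨Fin n, by infer_instance, e (St11.initQ p q h x),
    (fun s a => e (St11.delta p q h x R c (e.symm s) a)),
    (fun s => St11.outQ p q h x (by omega) (e.symm s)), ?_⟩
  intro w hw
  have key : ∀ (u : List (Fin p)) (s : St11.StQ p q h x),
      List.foldl (fun s a => e (St11.delta p q h x R c (e.symm s) a)) (e s) u =
      e (List.foldl (St11.delta p q h x R c) s u) := by
    intro u
    induction u with
    | nil => intro s; rfl
    | cons b u ih =>
      intro s
      simp only [List.foldl_cons]
      rw [e.symm_apply_apply]
      exact ih _
  rw [key w (St11.initQ p q h x)]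
  simp only [Equiv.symm_apply_apply]
  have hI := St11.inv_all (c := c) hq hpq hco hh hc hw
  set s := List.foldl (St11.delta p q h x R c) (St11.initQ p q h x) w with hsdef
  have hex : ∃ r, (s.2 r).isSome := ⟨_, hI.2.1⟩
  rw [St11.outQ, dif_pos hex]
  have hV : s.2 hex.choose = some ((s.2 hex.choose).get hex.choose_spec) :=
    (Option.some_get hex.choose_spec).symm
  have hclaim := hI.2.2 hex.choose _ hV 0 (St11.agree_zero q h _ _)
    ⟨[], by simpa using Nat.lt_of_lt_of_le Nat.zero_lt_one hh⟩ (by simp)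
  rw [hclaim]
  simp only [St11.trueVec, List.append_nil, if_pos hw]
  simp only [St11.optVal, Option.map_some, Option.getD_some]
  rw [St11.clip_x]
  rfl
end

section
/- There exists a sequence x : ℕ → ℚ taking only finitely many values that is 3/2-automatic but not (ℚ,3/2)-regular; that is, x is produced by a deterministic finite automaton with output reading base-3/2 representations, yet for every integer h ≥ 1 the tree T(L_{3/2}) decorated by d(w) = x(val_{3/2}(w)) is not (ℚ,h)-linear. -/
open scoped Classical

-- ===== auxiliary lemmas =====

lemma val_concat (w : List (Fin 3)) (a : Fin 3) :
    valPQ 3 2 (w ++ [a]) = (3 * valPQ 3 2 w + (a.val : ℚ)) / 2 := by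
  simp [valPQ, List.foldl_append]

lemma prefix_mem {w u : List (Fin 3)} (hw : w ∈ Lpq 3 2) (hu : u <+: w) :
    u ∈ Lpq 3 2 := by
  obtain ⟨h1, h2⟩ := hw
  refine ⟨?_, fun v hv => h2 v (hv.trans hu)⟩
  intro a ha
  apply h1 a
  obtain ⟨t, rfl⟩ := hu
  cases u with
  | nil => simp at ha
  | cons b s => simpa using ha

lemma mem_val_nat {w : List (Fin 3)} (hw : w ∈ Lpq 3 2) :
    ∃ n : ℕ, valPQ 3 2 w = (n : ℚ) := hw.2 w (List.prefix_refl w)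

lemma two_mul_eq {m n : ℕ} {a : Fin 3} (hval : ((3*(m:ℚ) + (a.val:ℚ))/2) = (n:ℚ)) :
    2*n = 3*m + a.val := by
  have h : (2*(n:ℚ)) = 3*(m:ℚ) + (a.val:ℚ) := by field_simp at hval; linarith
  exact_mod_cast h

lemma eq_nil_of_val_zero : ∀ w ∈ Lpq 3 2, valPQ 3 2 w = 0 → w = [] := by
  intro w
  induction w using List.reverseRecOn with
  | nil => intro _ _; rfl
  | append_singleton t a ih =>
    intro hw hv
    have ht : t ∈ Lpq 3 2 := prefix_mem hw ⟨[a], rfl⟩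
    obtain ⟨m, hm⟩ := mem_val_nat ht
    rw [val_concat, hm] at hv
    have h0 : 2 * 0 = 3 * m + a.val := two_mul_eq (by rw [hv]; norm_num)
    have hmz : m = 0 ∧ a.val = 0 := by omega
    have : t = [] := ih ht (by rw [hm, hmz.1]; norm_num)
    subst this
    exact absurd hmz.2 (hw.1 a (by simp))

lemma snoc_mem {w : List (Fin 3)} {n : ℕ} (hw : w ∈ Lpq 3 2)
    (hv : valPQ 3 2 w = (n : ℚ)) (a : Fin 3) (hne : w = [] → a.val ≠ 0)
    (hpar : (3 * n + a.val) % 2 = 0) :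
    w ++ [a] ∈ Lpq 3 2 ∧ valPQ 3 2 (w ++ [a]) = (((3 * n + a.val) / 2 : ℕ) : ℚ) := by
  obtain ⟨m2, hm2⟩ : ∃ m2, 3*n + a.val = 2*m2 := ⟨(3*n+a.val)/2, by omega⟩
  have hdv : (3*n + a.val)/2 = m2 := by omega
  have hval : valPQ 3 2 (w ++ [a]) = (((3 * n + a.val) / 2 : ℕ) : ℚ) := by
    rw [val_concat, hv, hdv]
    have hq : 3 * (n:ℚ) + (a.val:ℚ) = 2 * (m2:ℚ) := by exact_mod_cast hm2
    rw [hq]; ring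
  refine ⟨⟨?_, ?_⟩, hval⟩
  · intro b hb
    cases w with
    | nil =>
      simp at hb
      rw [← hb]; exact hne rfl
    | cons cc s =>
      simp at hb
      exact hw.1 b (by simp [hb])
  · intro u hu
    rcases List.prefix_concat_iff.mp hu with rfl | hu
    · exact ⟨_, hval⟩
    · exact hw.2 u hu

def rep : ℕ → List (Fin 3)
  | 0 => []
  | (n+1) => rep ((2*(n+1))/3) ++ [⟨(2*(n+1)) % 3, by omega⟩]
  decreasing_by
    exact Nat.div_lt_of_lt_mul (by omega)

lemma rep_zero : rep 0 = [] := by rw [rep]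

lemma rep_succ (n : ℕ) :
    rep (n+1) = rep ((2*(n+1))/3) ++ [⟨(2*(n+1)) % 3, by omega⟩] := by
  rw [rep]

lemma rep_spec : ∀ n : ℕ, rep n ∈ Lpq 3 2 ∧ valPQ 3 2 (rep n) = (n : ℚ) := by
  intro n
  induction n using Nat.strong_induction_on with
  | _ n ih =>
    match n with
    | 0 =>
      rw [rep_zero]
      refine ⟨⟨by simp, ?_⟩, by simp [valPQ]⟩
      intro u hu
      rw [List.prefix_nil.mp hu]
      exact ⟨0, by simp [valPQ]⟩
    | (n+1) =>
      have hm : (2*(n+1))/3 < n + 1 := Nat.div_lt_of_lt_mul (by omega)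
      obtain ⟨hmem, hval⟩ := ih _ hm
      rw [rep_succ]
      set m := (2*(n+1))/3 with hmdef
      set a : Fin 3 := ⟨(2*(n+1)) % 3, by omega⟩ with hadef
      have key : 3 * m + a.val = 2 * (n+1) := by
        simp only [hadef, hmdef]
        omega
      have hne : rep m = [] → a.val ≠ 0 := by
        intro hrm
        have hm0 : m = 0 := by
          by_contra hm0
          rw [hrm] at hval
          simp [valPQ] at hval
          exact hm0 (by exact_mod_cast hval.symm)
        simp only [hadef]
        omega
      have hs := snoc_mem hmem hval a hne (by omega)
      refine ⟨hs.1, ?_⟩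
      rw [hs.2]
      norm_cast
      omega

noncomputable def xseq : ℕ → ℚ := fun n => if n % 3 = 0 ∧ n ≠ 0 then 1 else 0

lemma toNat_cast (n : ℕ) : ((n : ℚ)).num.toNat = n := by simp

lemma dec_eq {w : List (Fin 3)} {n : ℕ} (hv : valPQ 3 2 w = (n : ℚ)) :
    decSeq 3 2 xseq w = xseq n := by
  rw [decSeq, hv, toNat_cast]

theorem statement13 :
    ∃ x : ℕ → ℚ, (Set.range x).Finite ∧ PQAutomatic 3 2 x ∧
      ∀ h : ℕ, 1 ≤ h → ¬ IsLinear ℚ (Lpq 3 2) (decSeq 3 2 x) h := by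
  refine ⟨xseq, ?_, ?_, ?_⟩
  · -- finite range
    refine Set.Finite.subset (Set.toFinite {(1:ℚ), 0}) ?_
    rintro y ⟨n, rfl⟩
    by_cases hcc : n % 3 = 0 ∧ n ≠ 0 <;> simp [xseq, hcc]
  · -- automatic
    refine ⟨Bool, inferInstance, false, fun _ a => decide (a.val = 0),
      fun b => if b then 1 else 0, ?_⟩
    intro w hw
    induction w using List.reverseRecOn with
    | nil => simp [valPQ, xseq]
    | append_singleton t a _ =>
      have ht : t ∈ Lpq 3 2 := prefix_mem hw ⟨[a], rfl⟩
      obtain ⟨m, hm⟩ := mem_val_nat ht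
      obtain ⟨n, hn⟩ := mem_val_nat hw
      have h2n : 2 * n = 3 * m + a.val := by
        apply two_mul_eq
        rw [← hm, ← val_concat]
        exact hn
      rw [hn, toNat_cast]
      rw [List.foldl_append]
      simp only [List.foldl_cons, List.foldl_nil]
      by_cases ha : a.val = 0
      · have h3 : n % 3 = 0 := by omega
        have hn0 : n ≠ 0 := by
          intro h0
          have hm0 : m = 0 := by omega
          have : t = [] := eq_nil_of_val_zero t ht (by rw [hm, hm0]; norm_num)
          subst this
          exact hw.1 a (by simp) ha
        simp [xseq, ha, h3, hn0]
      · have h3 : ¬ (n % 3 = 0) := by omega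
        simp [xseq, ha, h3]
  · -- not linear
    rintro h hh ⟨c, hc⟩
    set N : ℕ → ℕ := fun k => 3^(k+1) * 2^(h-1-k) - 1 with hN
    have hNbig : ∀ k, 3 ≤ 3^(k+1) * 2^(h-1-k) := by
      intro k
      have h3 : 3 ≤ 3^(k+1) := by
        calc (3:ℕ) = 3^1 := by norm_num
        _ ≤ 3^(k+1) := Nat.pow_le_pow_right (by norm_num) (by omega)
      have h2 : 1 ≤ 2^(h-1-k) := Nat.one_le_pow _ _ (by norm_num)
      calc (3:ℕ) = 3 * 1 := by norm_num
      _ ≤ 3^(k+1) * 2^(h-1-k) := Nat.mul_le_mul h3 h2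
    have hNpos : ∀ k, 1 ≤ N k := by
      intro k
      have := hNbig k
      simp only [hN]
      omega
    have hNodd : ∀ k, k + 1 ≤ h - 1 → N k % 2 = 1 := by
      intro k hk
      have hd : 2 ∣ 2^(h-1-k) := dvd_pow_self 2 (by omega)
      have h2 : 2 ∣ 3^(k+1) * 2^(h-1-k) := Dvd.dvd.mul_left hd _
      have := hNbig k
      simp only [hN]
      omega
    have hNmod3 : ∀ k, N k % 3 = 2 := by
      intro k
      have h2 : 3 ∣ 3^(k+1) * 2^(h-1-k) := Dvd.dvd.mul_right (dvd_pow_self 3 (by omega)) _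
      have := hNbig k
      simp only [hN]
      omega
    have hstep : ∀ k, k + 1 ≤ h - 1 → 3 * N k + 1 = 2 * N (k+1) := by
      intro k hk
      have e1 : h - 1 - k = (h - 1 - (k+1)) + 1 := by omega
      have h1 := hNbig k
      have h2 := hNbig (k+1)
      have e2 : 3 * (3^(k+1) * 2^(h-1-k)) = 2 * (3^(k+1+1) * 2^(h-1-(k+1))) := by
        rw [e1]; ring
      simp only [hN]
      omega
    set w : List (Fin 3) := rep (N 0) with hw
    obtain ⟨hwmem, hwval⟩ := rep_spec (N 0)
    rw [← hw] at hwmem hwval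
    have hwne : w ≠ [] := by
      intro habs
      have h0 : (N 0 : ℚ) = 0 := by rw [← hwval, habs]; simp [valPQ]
      have h1 : N 0 = 0 := by exact_mod_cast h0
      have := hNpos 0
      omega
    have traj : ∀ k, k ≤ h - 1 →
        (w ++ List.replicate k 1 ∈ Lpq 3 2 ∧
         valPQ 3 2 (w ++ List.replicate k 1) = ((N k : ℕ) : ℚ)) := by
      intro k
      induction k with
      | zero => intro _; simpa using ⟨hwmem, hwval⟩
      | succ k ih =>
        intro hk
        obtain ⟨hmem, hval⟩ := ih (by omega)
        have hodd := hNodd k hk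
        have hs := snoc_mem hmem hval 1 (by intro _; simp) (by simp; omega)
        have hdiv : (3 * N k + (1:Fin 3).val) / 2 = N (k+1) := by
          have := hstep k hk
          simp only [Fin.val_one]
          omega
        rw [hdiv] at hs
        rw [List.replicate_succ', ← List.append_assoc]
        exact hs
    obtain ⟨hwh, hvh⟩ := traj (h-1) (le_refl _)
    have only_ones : ∀ v, w ++ v ∈ Lpq 3 2 → v.length ≤ h - 1 →
        v = List.replicate v.length 1 := by
      intro v
      induction v using List.reverseRecOn with
      | nil => intro _ _; simp
      | append_singleton t a ih =>
        intro hmem hlen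
        have hlt : t.length ≤ h - 1 := by simp at hlen; omega
        have htmem : w ++ t ∈ Lpq 3 2 := prefix_mem hmem ⟨[a], by simp⟩
        obtain ⟨k, hk⟩ : ∃ k, t = List.replicate k 1 := ⟨t.length, ih htmem hlt⟩
        subst hk
        have hklen : k ≤ h - 1 := by simpa using hlt
        have hklen2 : k + 1 ≤ h - 1 := by simpa using hlen
        obtain ⟨nn, hnn⟩ := mem_val_nat hmem
        have h2n : 2 * nn = 3 * N k + a.val := by
          apply two_mul_eq
          rw [← (traj k hklen).2, ← val_concat]
          rw [← hnn, ← List.append_assoc]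
        have hodd := hNodd k hklen2
        have ha : a = 1 := by
          apply Fin.ext
          have : a.val < 3 := a.isLt
          simp only [Fin.val_one]
          omega
        rw [ha]
        simp [List.replicate_succ']
    set u0 : List (Fin 3) := List.replicate (h-1) 1 ++ [0] with hu0
    have hu0len : u0.length = h := by simp [hu0]; omega
    have hNh1even : N (h-1) % 2 = 0 := by
      have h3odd : 3^h % 2 = 1 := by
        rw [Nat.pow_mod]
        norm_num
      have e : h - 1 + 1 = h := by omega
      have := hNbig (h-1)
      simp only [hN, Nat.sub_self, pow_zero, mul_one, e] at *
      omega
    have hM := snoc_mem hwh hvh 0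
      (fun habs => absurd (List.append_eq_nil_iff.mp habs).1 hwne)
      (by simp [Fin.val_zero]; omega)
    set M : ℕ := (3 * N (h-1) + (0:Fin 3).val) / 2 with hMdef
    have hMmod : M % 3 = 0 := by
      have := hNmod3 (h-1)
      simp only [hMdef, Fin.val_zero]
      omega
    have hMne : M ≠ 0 := by
      have := hNpos (h-1)
      simp only [hMdef, Fin.val_zero]
      omega
    have hw0mem : w ++ u0 ∈ Lpq 3 2 := by
      rw [hu0, ← List.append_assoc]
      exact hM.1
    have heq := hc w hwmem u0 hu0len hw0mem
    have hRHS : ∑ᶠ v ∈ {v : List (Fin 3) | v.length < h ∧ w ++ v ∈ Lpq 3 2},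
        c (Dset (Lpq 3 2) h w) u0 v • decSeq 3 2 xseq (w ++ v) = 0 := by
      apply finsum_mem_of_eqOn_zero
      intro v hv
      obtain ⟨hvlen, hvmem⟩ := hv
      have hv1 := only_ones v hvmem (by omega)
      have hdv : decSeq 3 2 xseq (w ++ v) = xseq (N v.length) := by
        apply dec_eq
        rw [hv1] at hvmem ⊢
        simpa using (traj v.length (by omega)).2
      have hx0 : xseq (N v.length) = 0 := by
        have h1 := hNmod3 v.length
        have : ¬ (N v.length % 3 = 0 ∧ N v.length ≠ 0) := by omega
        simp [xseq, this]
      have hz : c (Dset (Lpq 3 2) h w) u0 v • decSeq 3 2 xseq (w ++ v) = 0 := by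
        rw [hdv, hx0, smul_zero]
      simpa using hz
    have hLHS : decSeq 3 2 xseq (w ++ u0) = 1 := by
      have hvv : valPQ 3 2 (w ++ u0) = ((M : ℕ) : ℚ) := by
        rw [hu0, ← List.append_assoc]
        exact hM.2
      rw [dec_eq hvv]
      simp [xseq, hMmod, hMne]
    rw [hLHS, hRHS] at heq
    exact one_ne_zero heq
end

section
/- Let L be a prefix-closed language over a finite alphabet A, R a commutative ring, M an R-module, and d : A* → M a decoration. Define the cumulative decoration d' : A* → M by d'(w) = Σ_{u ∈ Pref(w)} d(u), the sum over all |w|+1 prefixes u of w (including the empty word and w itself). If the decorated tree T_d(L) is (R,h)-linear for some integer h ≥ 1, then the decorated tree T_{d'}(L) is (R,h+1)-linear. -/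
open scoped Classical

theorem statement14 {A : Type*} [Fintype A] (R : Type*) {M : Type*} [CommRing R]
    [AddCommMonoid M] [Module R M] (L : Set (List A)) (hpc : PrefixClosed L)
    (d : List A → M) (h : ℕ) (hh : 1 ≤ h) (hlin : IsLinear R L d h) :
    IsLinear R L (fun w => (w.inits.map d).sum) (h + 1) := by
  classical
  obtain ⟨c, hc⟩ := hlin
  set d' : List A → M := fun w => (w.inits.map d).sum with hd'
  have hconcat : ∀ (x : List A) (a : A), d' (x ++ [a]) = d' x + d (x ++ [a]) := by
    intro x a
    simp [hd', List.inits_append]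
  refine ⟨fun D u v =>
      (if v = u.dropLast then (1:R) else 0)
    + (if v.head? = u.head? ∧ v ≠ [] then
        c {x | x.length ≤ h ∧ u.take 1 ++ x ∈ D} u.tail v.tail else 0)
    + (if v = [] then - c {x | x.length ≤ h ∧ u.take 1 ++ x ∈ D} u.tail [] else 0)
    + ∑ a : A, (if v.head? = u.head? ∧ v ≠ [] ∧ v.length < h ∧ v ++ [a] ∈ D then
        - c {x | x.length ≤ h ∧ u.take 1 ++ x ∈ D} u.tail (v.tail ++ [a]) else 0), ?_⟩
  intro w hw u hu hwu
  obtain ⟨b, u', rfl⟩ : ∃ b u', u = b :: u' := by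
    cases u with
    | nil => simp at hu
    | cons b u' => exact ⟨b, u', rfl⟩
  have hu' : u'.length = h := by simpa using hu
  have hwbu : (w ++ [b]) ++ u' ∈ L := by simpa using hwu
  have hwb : w ++ [b] ∈ L := hpc _ u' hwbu
  -- the shifted domain
  have hD' : {x : List A | x.length ≤ h ∧ (b :: u').take 1 ++ x ∈ Dset L (h+1) w}
      = Dset L h (w ++ [b]) := by
    ext x
    simp only [Set.mem_setOf_eq, Dset, show (b :: u').take 1 = [b] from rfl,
      List.append_assoc, List.cons_append, List.nil_append, List.length_cons]
    constructor
    · rintro ⟨h1, _, h3⟩; exact ⟨h1, h3⟩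
    · rintro ⟨h1, h2⟩; exact ⟨h1, by omega, h2⟩
  set D' : Set (List A) := Dset L h (w ++ [b]) with hD'def
  -- finiteness
  have hSfin : {v : List A | v.length < h + 1 ∧ w ++ v ∈ L}.Finite :=
    (List.finite_length_lt A (h+1)).subset fun v hv => hv.1
  have hS'fin : {v : List A | v.length < h ∧ (w ++ [b]) ++ v ∈ L}.Finite :=
    (List.finite_length_lt A h).subset fun v hv => hv.1
  set sF : Finset (List A) := hSfin.toFinset with hsF
  set s'F : Finset (List A) := hS'fin.toFinset with hs'F
  have hmem_sF : ∀ v : List A, v ∈ sF ↔ v.length < h + 1 ∧ w ++ v ∈ L := by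
    intro v; rw [hsF, Set.Finite.mem_toFinset]; rfl
  have hmem_s'F : ∀ v : List A, v ∈ s'F ↔ v.length < h ∧ (w ++ [b]) ++ v ∈ L := by
    intro v; rw [hs'F, Set.Finite.mem_toFinset]; rfl
  -- the linearity of d at w ++ [b]
  have hkey := hc (w ++ [b]) hwb u' hu' hwbu
  rw [finsum_mem_eq_finite_toFinset_sum _ hS'fin, ← hs'F, ← hD'def] at hkey
  rw [finsum_mem_eq_finite_toFinset_sum _ hSfin]
  rw [← hsF]
  simp only [hD', List.head?_cons, List.tail_cons]
  set f : List A → M := fun v => d' (w ++ v) with hf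
  -- split the coefficient into four pieces
  have hsplit : ∀ v ∈ sF,
      ((if v = (b :: u').dropLast then (1:R) else 0)
        + (if v.head? = some b ∧ v ≠ [] then c D' u' v.tail else 0)
        + (if v = [] then - c D' u' [] else 0)
        + ∑ a : A, (if v.head? = some b ∧ v ≠ [] ∧ v.length < h ∧ v ++ [a] ∈ Dset L (h+1) w then
            - c D' u' (v.tail ++ [a]) else 0)) • f v
      = (if v = (b :: u').dropLast then (1:R) else 0) • f v
        + (if v.head? = some b ∧ v ≠ [] then c D' u' v.tail else 0) • f v
        + (if v = [] then - c D' u' [] else 0) • f v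
        + (∑ a : A, (if v.head? = some b ∧ v ≠ [] ∧ v.length < h ∧ v ++ [a] ∈ Dset L (h+1) w then
            - c D' u' (v.tail ++ [a]) else 0)) • f v := by
    intro v _
    rw [add_smul, add_smul, add_smul]
  rw [Finset.sum_congr rfl hsplit, Finset.sum_add_distrib, Finset.sum_add_distrib,
    Finset.sum_add_distrib]
  -- Sum 1
  have hdl_mem : (b :: u').dropLast ∈ sF := by
    rw [hmem_sF]
    constructor
    · simp only [List.length_dropLast_cons]; omega
    · apply hpc _ [(b :: u').getLast (List.cons_ne_nil b u')]
      rw [List.append_assoc, List.dropLast_append_getLast (List.cons_ne_nil b u')]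
      exact hwu
  have hS1 : ∑ v ∈ sF, (if v = (b :: u').dropLast then (1:R) else 0) • f v
      = f ((b :: u').dropLast) := by
    have : ∀ v ∈ sF, (if v = (b :: u').dropLast then (1:R) else 0) • f v
        = if v = (b :: u').dropLast then f v else 0 := by
      intro v _; split <;> simp
    rw [Finset.sum_congr rfl this, Finset.sum_ite_eq' sF _ f, if_pos hdl_mem]
  -- Sum 3
  have hnil_mem : ([] : List A) ∈ sF := by
    rw [hmem_sF]
    exact ⟨by simp, by simpa using hw⟩
  have hS3 : ∑ v ∈ sF, (if v = [] then - c D' u' [] else 0) • f v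
      = (- c D' u' []) • f [] := by
    have : ∀ v ∈ sF, (if v = [] then - c D' u' [] else 0) • f v
        = if v = [] then (- c D' u' []) • f v else 0 := by
      intro v _; split <;> simp
    rw [Finset.sum_congr rfl this, Finset.sum_ite_eq' sF _ (fun v => (- c D' u' []) • f v),
      if_pos hnil_mem]
  -- Sum 2
  have hS2 : ∑ v ∈ sF, (if v.head? = some b ∧ v ≠ [] then c D' u' v.tail else 0) • f v
      = ∑ v'' ∈ s'F, c D' u' v'' • f (b :: v'') := by
    have step : ∀ v ∈ sF, (if v.head? = some b ∧ v ≠ [] then c D' u' v.tail else 0) • f v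
        = if v.head? = some b ∧ v ≠ [] then c D' u' v.tail • f v else 0 := by
      intro v _; split <;> simp
    rw [Finset.sum_congr rfl step, ← Finset.sum_filter]
    refine Finset.sum_bij' (fun v _ => v.tail) (fun v'' _ => b :: v'') ?_ ?_ ?_ ?_ ?_
    · intro v hv
      rw [Finset.mem_filter, hmem_sF] at hv
      obtain ⟨⟨hlen, hmemL⟩, hhead, hne⟩ := hv
      obtain ⟨x, t, rfl⟩ : ∃ x t, v = x :: t := by
        cases v with
        | nil => exact absurd rfl hne
        | cons x t => exact ⟨x, t, rfl⟩
      obtain rfl : x = b := by simpa using hhead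
      rw [hmem_s'F]
      refine ⟨by simpa using hlen, ?_⟩
      simpa using hmemL
    · intro v'' hv''
      rw [hmem_s'F] at hv''
      rw [Finset.mem_filter, hmem_sF]
      refine ⟨⟨by simpa using hv''.1, by simpa using hv''.2⟩, by simp, by simp⟩
    · intro v hv
      rw [Finset.mem_filter] at hv
      obtain ⟨x, t, rfl⟩ : ∃ x t, v = x :: t := by
        cases v with
        | nil => exact absurd rfl hv.2.2
        | cons x t => exact ⟨x, t, rfl⟩
      obtain rfl : x = b := by simpa using hv.2.1
      rfl
    · intro v'' _; rfl
    · intro v hv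
      rw [Finset.mem_filter] at hv
      obtain ⟨x, t, rfl⟩ : ∃ x t, v = x :: t := by
        cases v with
        | nil => exact absurd rfl hv.2.2
        | cons x t => exact ⟨x, t, rfl⟩
      obtain rfl : x = b := by simpa using hv.2.1
      rfl
  -- Sum 4
  have hS4 : ∑ v ∈ sF, (∑ a : A, (if v.head? = some b ∧ v ≠ [] ∧ v.length < h ∧
        v ++ [a] ∈ Dset L (h+1) w then - c D' u' (v.tail ++ [a]) else 0)) • f v
      = ∑ v'' ∈ s'F.filter (· ≠ []), (- c D' u' v'') • f (b :: v''.dropLast) := by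
    have step1 : ∀ v ∈ sF, (∑ a : A, (if v.head? = some b ∧ v ≠ [] ∧ v.length < h ∧
          v ++ [a] ∈ Dset L (h+1) w then - c D' u' (v.tail ++ [a]) else 0)) • f v
        = ∑ a : A, (if v.head? = some b ∧ v ≠ [] ∧ v.length < h ∧
          v ++ [a] ∈ Dset L (h+1) w then (- c D' u' (v.tail ++ [a])) • f v else 0) := by
      intro v _
      rw [Finset.sum_smul]
      refine Finset.sum_congr rfl fun a _ => ?_
      split <;> simp
    rw [Finset.sum_congr rfl step1, ← Finset.sum_product' sF Finset.univ]
    have step2 : ∀ p ∈ sF ×ˢ (Finset.univ : Finset A),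
        (if p.1.head? = some b ∧ p.1 ≠ [] ∧ p.1.length < h ∧ p.1 ++ [p.2] ∈ Dset L (h+1) w
          then (- c D' u' (p.1.tail ++ [p.2])) • f p.1 else 0)
        = if p.1.head? = some b ∧ p.1 ≠ [] ∧ p.1.length < h ∧ p.1 ++ [p.2] ∈ Dset L (h+1) w
          then (- c D' u' (p.1.tail ++ [p.2])) • f p.1 else 0 := fun _ _ => rfl
    rw [← Finset.sum_filter (fun p : List A × A => p.1.head? = some b ∧ p.1 ≠ [] ∧
      p.1.length < h ∧ p.1 ++ [p.2] ∈ Dset L (h+1) w)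
      (fun p : List A × A => (- c D' u' (p.1.tail ++ [p.2])) • f p.1)]
    refine Finset.sum_bij' (fun p _ => p.1.tail ++ [p.2])
      (fun v'' hv'' => (b :: v''.dropLast,
        v''.getLast (by simp only [Finset.mem_filter] at hv''; exact hv''.2))) ?_ ?_ ?_ ?_ ?_
    · rintro ⟨v, a⟩ hp
      rw [Finset.mem_filter] at hp
      obtain ⟨hmem, hhead, hne, hlen, hda⟩ := hp
      obtain ⟨x, t, rfl⟩ : ∃ x t, v = x :: t := by
        cases v with
        | nil => exact absurd rfl hne
        | cons x t => exact ⟨x, t, rfl⟩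
      obtain rfl : x = b := by simpa using hhead
      rw [Finset.mem_filter, hmem_s'F]
      refine ⟨⟨by simpa using hlen, ?_⟩, by simp⟩
      have := hda.2
      simpa [List.append_assoc] using this
    · rintro v'' hv''
      rw [Finset.mem_filter, hmem_s'F] at hv''
      obtain ⟨⟨hlen, hmemL⟩, hne⟩ := hv''
      obtain ⟨y, a0, rfl⟩ : ∃ y a0, v'' = y ++ [a0] :=
        ⟨v''.dropLast, v''.getLast hne, (List.dropLast_append_getLast hne).symm⟩
      have hylen : y.length + 1 < h := by simpa using hlen
      have hymem : w ++ [b] ++ (y ++ [a0]) ∈ L := hmemL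
      simp only [List.dropLast_concat, List.getLast_concat]
      rw [Finset.mem_filter, Finset.mem_product, hmem_sF]
      refine ⟨⟨⟨by simp; omega, ?_⟩, Finset.mem_univ _⟩, by simp, by simp, by simp; omega, ?_⟩
      · apply hpc _ [a0]
        have he : w ++ b :: y ++ [a0] = w ++ [b] ++ (y ++ [a0]) := by simp
        rw [he]; exact hymem
      · refine ⟨by simp; omega, ?_⟩
        have he : w ++ (b :: y ++ [a0]) = w ++ [b] ++ (y ++ [a0]) := by simp
        rw [he]; exact hymem
    · rintro ⟨v, a⟩ hp
      rw [Finset.mem_filter] at hp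
      obtain ⟨x, t, rfl⟩ : ∃ x t, v = x :: t := by
        cases v with
        | nil => exact absurd rfl hp.2.2.1
        | cons x t => exact ⟨x, t, rfl⟩
      obtain rfl : x = b := by simpa using hp.2.1
      simp [List.getLast_concat]
    · rintro v'' hv''
      rw [Finset.mem_filter] at hv''
      simp [List.dropLast_append_getLast hv''.2]
    · rintro ⟨v, a⟩ hp
      rw [Finset.mem_filter] at hp
      obtain ⟨x, t, rfl⟩ : ∃ x t, v = x :: t := by
        cases v with
        | nil => exact absurd rfl hp.2.2.1
        | cons x t => exact ⟨x, t, rfl⟩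
      obtain rfl : x = b := by simpa using hp.2.1
      simp

  rw [hS1, hS2, hS3, hS4]
  have hnil'_mem : ([] : List A) ∈ s'F := by
    rw [hmem_s'F]
    exact ⟨by simp; omega, by simpa using hwb⟩
  set g : List A → M := fun v'' => (- c D' u' v'') • f ((b :: v'').dropLast) with hg
  have hS34 : (- c D' u' []) • f []
      + ∑ v'' ∈ s'F.filter (· ≠ []), (- c D' u' v'') • f (b :: v''.dropLast)
      = ∑ v'' ∈ s'F, g v'' := by
    have h1 : ∑ v'' ∈ s'F.filter (· ≠ []), (- c D' u' v'') • f (b :: v''.dropLast)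
        = ∑ v'' ∈ s'F.erase [], g v'' := by
      rw [← Finset.filter_ne']
      refine Finset.sum_congr rfl fun v'' hv'' => ?_
      rw [Finset.mem_filter] at hv''
      obtain ⟨x, t, rfl⟩ : ∃ x t, v'' = x :: t := by
        cases v'' with
        | nil => exact absurd rfl hv''.2
        | cons x t => exact ⟨x, t, rfl⟩
      simp [hg]
    rw [h1, ← Finset.add_sum_erase s'F g hnil'_mem]
    congr 1
  have hfinal : ∑ v'' ∈ s'F, c D' u' v'' • f (b :: v'') + ∑ v'' ∈ s'F, g v''
      = d (w ++ [b] ++ u') := by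
    rw [← Finset.sum_add_distrib, hkey]
    refine Finset.sum_congr rfl fun v'' _ => ?_
    have hnne : b :: v'' ≠ [] := List.cons_ne_nil b v''
    have hsplitn : (b :: v'').dropLast ++ [(b :: v'').getLast hnne] = b :: v'' :=
      List.dropLast_append_getLast hnne
    have e1 : w ++ [b] ++ v''
        = (w ++ (b :: v'').dropLast) ++ [(b :: v'').getLast hnne] := by
      conv_rhs => rw [List.append_assoc, hsplitn]
      simp
    have hfn : f (b :: v'') = d' (w ++ (b :: v'').dropLast) + d (w ++ [b] ++ v'') := by
      show d' (w ++ b :: v'') = _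
      have e1' : w ++ b :: v'' = (w ++ (b :: v'').dropLast) ++ [(b :: v'').getLast hnne] := by
        simpa using e1
      rw [e1', hconcat, ← e1']
      have : d (w ++ b :: v'') = d (w ++ [b] ++ v'') := by simp
      rw [this]
    show c D' u' v'' • f (b :: v'') + (- c D' u' v'') • d' (w ++ (b :: v'').dropLast)
        = c D' u' v'' • d (w ++ [b] ++ v'')
    rw [hfn, smul_add, add_right_comm, ← add_smul]
    rw [add_neg_cancel, zero_smul, zero_add]
  rw [add_assoc, add_assoc, hS34, hfinal]
  have hnne : b :: u' ≠ [] := List.cons_ne_nil b u'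
  have e2 : w ++ [b] ++ u'
      = (w ++ (b :: u').dropLast) ++ [(b :: u').getLast hnne] := by
    conv_rhs => rw [List.append_assoc, List.dropLast_append_getLast hnne]
    simp
  show d' (w ++ b :: u') = f ((b :: u').dropLast) + d (w ++ [b] ++ u')
  have e2' : w ++ b :: u' = (w ++ (b :: u').dropLast) ++ [(b :: u').getLast hnne] := by
    simpa using e2
  rw [e2', hconcat, ← e2']
  have : d (w ++ b :: u') = d (w ++ [b] ++ u') := by simp
  rw [this]
end

section
/- Let k ≥ 2 be an integer, R a commutative Noetherian ring, M an R-module, and x : ℕ → M an (R,k)-regular sequence. For n ≥ 0 let rep_k(n) be the unique word of L_k with val_k(rep_k(n)) = n (so rep_k(0) = ε), and define the cumulative version y : ℕ → M of x by y(n) = Σ_{u ∈ Pref(rep_k(n))} x(val_k(u)), the sum over all prefixes u of rep_k(n) (including ε and rep_k(n) itself). Then y is (R,k)-regular. -/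
open scoped Classical

lemma foldl_ge (k : ℕ) (hk : 1 ≤ k) :
    ∀ (w : List (Fin k)) (acc : ℕ), acc ≤ w.foldl (fun acc a => k * acc + a.val) acc := by
  intro w
  induction w with
  | nil => intro acc; simp
  | cons a t ih =>
    intro acc
    simp only [List.foldl_cons]
    calc acc ≤ k * acc + a.val := by
          have : acc ≤ k * acc := Nat.le_mul_of_pos_left acc hk
          omega
      _ ≤ _ := ih _

lemma valK_pos (k : ℕ) (hk : 1 ≤ k) (w : List (Fin k)) (hw : w ∈ Lk k) (hne : w ≠ []) :
    1 ≤ valK k w := by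
  obtain ⟨a, t, rfl⟩ := List.exists_cons_of_ne_nil hne
  have ha : a.val ≠ 0 := hw a rfl
  simp only [valK, List.foldl_cons, Nat.mul_zero, Nat.zero_add]
  calc 1 ≤ a.val := by omega
    _ ≤ _ := foldl_ge k hk t a.val

lemma valK_concat (k : ℕ) (w : List (Fin k)) (a : Fin k) :
    valK k (w ++ [a]) = k * valK k w + a.val := by
  simp [valK, List.foldl_append]

lemma Lk_of_concat (k : ℕ) (w : List (Fin k)) (a : Fin k) (h : w ++ [a] ∈ Lk k) :
    w ∈ Lk k := by
  intro b hb
  apply h b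
  cases w with
  | nil => simp at hb
  | cons c t => simpa using hb

lemma valK_injOn (k : ℕ) (hk : 2 ≤ k) :
    ∀ n (w w' : List (Fin k)), w ∈ Lk k → w' ∈ Lk k →
      valK k w = n → valK k w' = n → w = w' := by
  intro n
  induction n using Nat.strong_induction_on with
  | _ n ih =>
    intro w w' hw hw' hv hv'
    rcases Nat.eq_zero_or_pos n with rfl | hn
    · -- both empty
      have h1 : w = [] := by
        by_contra hne
        have := valK_pos k (by omega) w hw hne
        omega
      have h2 : w' = [] := by
        by_contra hne
        have := valK_pos k (by omega) w' hw' hne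
        omega
      rw [h1, h2]
    · have hwne : w ≠ [] := by
        rintro rfl
        simp [valK] at hv; omega
      have hw'ne : w' ≠ [] := by
        rintro rfl
        simp [valK] at hv'; omega
      obtain ⟨u, a, rfl⟩ := List.eq_nil_or_concat' w |>.resolve_left hwne
      obtain ⟨u', a', rfl⟩ := List.eq_nil_or_concat' w' |>.resolve_left hw'ne
      rw [valK_concat] at hv hv'
      have hkpos : 0 < k := by omega
      have ha : a.val = n % k := by
        rw [← hv, Nat.mul_add_mod, Nat.mod_eq_of_lt a.isLt]
      have hu : valK k u = n / k := by
        rw [← hv, Nat.mul_add_div hkpos, Nat.div_eq_of_lt a.isLt, Nat.add_zero]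
      have ha' : a'.val = n % k := by
        rw [← hv', Nat.mul_add_mod, Nat.mod_eq_of_lt a'.isLt]
      have hu' : valK k u' = n / k := by
        rw [← hv', Nat.mul_add_div hkpos, Nat.div_eq_of_lt a'.isLt, Nat.add_zero]
      have hlt : n / k < n := Nat.div_lt_self hn (by omega)
      have := ih (n / k) hlt u u' (Lk_of_concat k u a hw) (Lk_of_concat k u' a' hw') hu hu'
      subst this
      have : a = a' := Fin.ext (by omega)
      rw [this]

theorem statement15 (k : ℕ) (hk : 2 ≤ k) (R : Type*) [CommRing R]
    [IsNoetherianRing R] (M : Type*) [AddCommMonoid M] [Module R M]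
    (x : ℕ → M) (hx : kRegular R k x)
    (rep : ℕ → List (Fin k)) (hrep : ∀ n, rep n ∈ Lk k)
    (hval : ∀ n, valK k (rep n) = n) :
    kRegular R k (fun n => ((rep n).inits.map (fun u => x (valK k u))).sum) := by
  have hkpos : 0 < k := by omega
  set y : ℕ → M := fun n => ((rep n).inits.map (fun u => x (valK k u))).sum with hy
  -- rep 0 = []
  have hrep0 : rep 0 = [] := by
    refine valK_injOn k hk 0 (rep 0) [] (hrep 0) ?_ (hval 0) rfl
    intro a h; simp at h
  -- rep recursion
  have hrepsucc : ∀ n : ℕ, 1 ≤ n →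
      rep n = rep (n / k) ++ [⟨n % k, Nat.mod_lt n hkpos⟩] := by
    intro n hn
    refine valK_injOn k hk n (rep n) _ (hrep n) ?_ (hval n) ?_
    · intro b hb
      cases hcase : rep (n / k) with
      | nil =>
        rw [hcase] at hb
        simp only [List.nil_append, List.head?_cons, Option.some.injEq] at hb
        subst hb
        have hq : n / k = 0 := by rw [← hval (n / k), hcase]; rfl
        have hnk : n < k := ((Nat.div_eq_zero_iff).mp hq).resolve_left (by omega)
        show n % k ≠ 0
        rw [Nat.mod_eq_of_lt hnk]
        omega
      | cons c t =>
        rw [hcase] at hb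
        simp only [List.cons_append, List.head?_cons, Option.some.injEq] at hb
        subst hb
        exact hrep (n / k) c (by rw [hcase]; rfl)
    · rw [valK_concat, hval]
      exact Nat.div_add_mod n k
  -- y at 0
  have hy0 : y 0 = x 0 := by
    simp [hy, hrep0, List.inits, valK]
  -- y recursion
  have hyrec : ∀ n : ℕ, 1 ≤ n → y n = y (n / k) + x n := by
    intro n hn
    have h1 : y n = ((rep n).inits.map (fun u => x (valK k u))).sum := rfl
    rw [h1, hrepsucc n hn]
    rw [show rep (n / k) ++ [(⟨n % k, Nat.mod_lt n hkpos⟩ : Fin k)]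
        = (rep (n / k)).concat ⟨n % k, Nat.mod_lt n hkpos⟩ from List.concat_eq_append.symm]
    have hic : ((rep (n / k)).concat (⟨n % k, Nat.mod_lt n hkpos⟩ : Fin k)).inits
        = (rep (n / k)).inits ++ [(rep (n / k)).concat ⟨n % k, Nat.mod_lt n hkpos⟩] := by
      simp [List.concat_eq_append, List.inits_append, List.inits]
    rw [hic, List.map_append, List.sum_append]
    simp only [List.map_cons, List.map_nil, List.sum_cons, List.sum_nil, add_zero,
      List.concat_eq_append]
    congr 1
    rw [← hrepsucc n hn, hval]
  -- the big f.g. submodule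
  set z : ℕ → M := fun n => if n = 0 then x 0 else 0 with hz
  set N : Submodule R (ℕ → M) :=
    Submodule.span R (kKernel k x) ⊔ Submodule.span R {y} ⊔ Submodule.span R {z} with hN
  have hNfg : N.FG := (hx.sup (Submodule.fg_span_singleton y)).sup (Submodule.fg_span_singleton z)
  have hyN : y ∈ N := by
    apply Submodule.mem_sup_left
    apply Submodule.mem_sup_right
    exact Submodule.mem_span_singleton_self y
  have hzN : z ∈ N := by
    apply Submodule.mem_sup_right
    exact Submodule.mem_span_singleton_self z
  have hxN : ∀ j r : ℕ, r < k ^ j → (fun n => x (k ^ j * n + r)) ∈ N := by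
    intro j r hr
    apply Submodule.mem_sup_left
    apply Submodule.mem_sup_left
    exact Submodule.subset_span ⟨j, r, hr, rfl⟩
  -- main claim
  have key : ∀ j r : ℕ, r < k ^ j → (fun n => y (k ^ j * n + r)) ∈ N := by
    intro j
    induction j with
    | zero =>
      intro r hr
      have : r = 0 := by simpa using hr
      subst this
      have : (fun n => y (k ^ 0 * n + 0)) = y := by
        funext n; simp
      rw [this]; exact hyN
    | succ j ih =>
      intro r hr
      have hrk : r / k < k ^ j := by
        rw [Nat.div_lt_iff_lt_mul hkpos]
        calc r < k ^ (j + 1) := hr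
          _ = k ^ j * k := by ring
      have hg : (fun n => y (k ^ j * n + r / k)) ∈ N := ih (r / k) hrk
      have hh : (fun n => x (k ^ (j + 1) * n + r)) ∈ N := hxN (j + 1) r hr
      have hcz : (if r = 0 then z else 0) ∈ N := by
        split
        · exact hzN
        · exact N.zero_mem
      have heq : (fun n => y (k ^ (j + 1) * n + r)) =
          (fun n => y (k ^ j * n + r / k)) + (fun n => x (k ^ (j + 1) * n + r))
            + (-1 : R) • (if r = 0 then z else 0) := by
        funext n
        simp only [Pi.add_apply, Pi.smul_apply]
        rcases Nat.eq_zero_or_pos r with rfl | hrpos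
        · rw [if_pos rfl]
          rcases Nat.eq_zero_or_pos n with rfl | hnpos
          · have hz0 : z 0 = x 0 := by simp [hz]
            simp only [Nat.mul_zero, Nat.add_zero, Nat.zero_add, hy0, Nat.zero_div, hz0]
            have h2 : x 0 + (-1 : R) • x 0 = 0 := by
              nth_rw 1 [← one_smul R (x 0)]
              rw [← add_smul]
              simp
            first
              | rw [add_assoc, h2, add_zero]
              | rw [h2, add_zero]
          · have h1 : 1 ≤ k ^ (j + 1) * n + 0 := by
              have : 0 < k ^ (j + 1) := Nat.pow_pos hkpos
              nlinarith
            rw [hyrec _ h1]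
            have hd : (k ^ (j + 1) * n + 0) / k = k ^ j * n + 0 / k := by
              simp [pow_succ, mul_comm (k ^ j) k, mul_assoc, Nat.mul_div_cancel_left _ hkpos]
            rw [hd]
            have hzn : z n = 0 := by simp [hz, Nat.pos_iff_ne_zero.mp hnpos]
            rw [hzn, smul_zero]
            simp
        · simp only [if_neg (Nat.pos_iff_ne_zero.mp hrpos), Pi.zero_apply, smul_zero, add_zero]
          have h1 : 1 ≤ k ^ (j + 1) * n + r := by omega
          rw [hyrec _ h1]
          congr 1
          congr 1
          rw [pow_succ, mul_comm (k ^ j) k, mul_assoc, Nat.mul_add_div hkpos]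
      rw [heq]
      exact N.add_mem (N.add_mem hg hh) (N.smul_mem _ hcz)
  -- conclude
  have hle : Submodule.span R (kKernel k y) ≤ N := by
    rw [Submodule.span_le]
    rintro _ ⟨j, r, hr, rfl⟩
    exact key j r hr
  letI : AddCommGroup (ℕ → M) := Module.addCommMonoidToAddCommGroup R
  haveI : IsNoetherian R N := isNoetherian_of_fg_of_noetherian N hNfg
  have hfg : (Submodule.comap N.subtype (Submodule.span R (kKernel k y))).FG :=
    IsNoetherian.noetherian _
  have := hfg.map N.subtype
  rw [Submodule.map_comap_subtype, inf_eq_right.mpr hle] at this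
  exact this
end
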